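/- arXiv:1103.1934 — 7 statements merged into one kernel-verified Lean document; each statement's English description precedes it below -/
import Mathlib

section
/- Let F be a 2k-uniform 2-cancellative family of subsets of [n]. Then |F| ≤ binomial(n,k) / ((1/2)·binomial(2k,k)), i.e., binomial(2k,k)·|F| ≤ 2·binomial(n,k). -/
/-- A family is 2-cancellative: for all four distinct members `A1, A2, B, C`,
`A1 ∪ A2 ∪ B = A1 ∪ A2 ∪ C` implies `B = C`. -/
def TwoCancellative (F : Finset (Finset ℕ)) : Prop :=
  ∀ A1 A2 B C : Finset ℕ, A1 ∈ F → A2 ∈ F → B ∈ F → C ∈ F →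
    A1 ≠ A2 → A1 ≠ B → A1 ≠ C → A2 ≠ B → A2 ≠ C →
    A1 ∪ A2 ∪ B = A1 ∪ A2 ∪ C → B = C

/-!
Call a pair `(S, T)` with `S ∩ T = ∅`, `|S| = |T| = k` and `S ∪ T ∈ F` an edge between the
`k`-sets `S` and `T`. Every member of `F` is split in `binom(2k,k)` ordered ways and distinct
members give distinct edges, so there are `binom(2k,k) |F|` ordered edges. When `|F| ≥ 4`,
2-cancellativity forbids a vertex `S` with neighbours `T₁ ≠ T₂` that have further neighbours
`U₁, U₂ ≠ S`: adding `S ∪ T₁` or `S ∪ T₂` to the union of `T₁ ∪ U₁` and `T₂ ∪ U₂` (or of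
`T₁ ∪ U₁` and a fourth member, if these coincide) gives the same set. Hence every subgraph has a
leaf (a vertex of degree one), so the graph has at most as many edges as vertices, i.e. at most
`binom(n,k)`. Families with at most three members are handled by binomial estimates.
-/

open Finset

section

variable {α : Type*} [DecidableEq α]

theorem card_le_two_mul_card_image_fst_of_exists_leaf {P : Finset (α × α)}
    (hsymm : ∀ p ∈ P, p.swap ∈ P)
    (hleaf : ∀ Q ⊆ P, Q.Nonempty → (∀ p ∈ Q, p.swap ∈ Q) →
      ∃ p ∈ Q, ∀ q ∈ Q, q.1 = p.1 → q = p) :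
    #P ≤ 2 * #(P.image Prod.fst) := by
  induction P using Finset.strongInduction with
  | H P ih =>
  obtain rfl | hP := P.eq_empty_or_nonempty
  · simp
  obtain ⟨p, hp, hp_leaf⟩ := hleaf P Subset.rfl hP hsymm
  set Q := P \ {p, p.swap}
  have hQP : Q ⊂ P :=
    sdiff_ssubset (insert_subset hp (singleton_subset_iff.2 (hsymm p hp))) (insert_nonempty _ _)
  have hQsymm : ∀ q ∈ Q, q.swap ∈ Q := by
    intro q hq
    simp only [Q, mem_sdiff, mem_insert, mem_singleton] at hq ⊢
    refine ⟨hsymm q hq.1, ?_⟩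
    rw [Prod.swap_eq_iff_eq_swap, Prod.swap_inj]
    tauto
  have hQ := ih Q hQP hQsymm fun R hR => hleaf R (hR.trans hQP.subset)
  have himage : Q.image Prod.fst ⊆ (P.image Prod.fst).erase p.1 := by
    intro a ha
    obtain ⟨q, hq, rfl⟩ := mem_image.1 ha
    obtain ⟨hqP, hqp⟩ := mem_sdiff.1 hq
    exact mem_erase.2 ⟨fun h => hqp (by simp [hp_leaf q hqP h]), mem_image_of_mem _ hqP⟩
  have hp_mem : p.1 ∈ P.image Prod.fst := mem_image_of_mem _ hp
  have hpos : 0 < #(P.image Prod.fst) := card_pos.2 ⟨_, hp_mem⟩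
  calc #P ≤ #Q + 2 := card_le_card_sdiff_add_card.trans (by gcongr; exact card_le_two)
    _ ≤ 2 * #((P.image Prod.fst).erase p.1) + 2 := by gcongr; exact hQ.trans (by gcongr)
    _ = 2 * #(P.image Prod.fst) := by rw [card_erase_of_mem hp_mem]; omega

def splittings (k : ℕ) (F : Finset (Finset α)) : Finset (Finset α × Finset α) :=
  F.biUnion fun A => (A.powersetCard k).image fun S => (S, A \ S)

variable {k : ℕ} {F : Finset (Finset α)}

theorem mem_splittings {S T : Finset α} :
    (S, T) ∈ splittings k F ↔ #S = k ∧ Disjoint S T ∧ S ∪ T ∈ F := by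
  simp only [splittings, mem_biUnion, mem_image, mem_powersetCard, Prod.mk.injEq]
  constructor
  · rintro ⟨A, hA, S, ⟨hSA, rfl⟩, rfl, rfl⟩
    exact ⟨rfl, disjoint_sdiff, by rwa [union_sdiff_of_subset hSA]⟩
  · rintro ⟨hS, hST, hF⟩
    exact ⟨S ∪ T, hF, S, ⟨subset_union_left, hS⟩, rfl, union_sdiff_cancel_left hST⟩

theorem card_splittings : #(splittings k F) = ∑ A ∈ F, (#A).choose k := by
  have hunion : ∀ A : Finset α, ∀ p ∈ (A.powersetCard k).image fun S => (S, A \ S),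
      p.1 ∪ p.2 = A := by
    simp only [mem_image, mem_powersetCard]
    rintro A _ ⟨S, ⟨hSA, -⟩, rfl⟩
    exact union_sdiff_of_subset hSA
  rw [splittings, card_biUnion]
  · refine sum_congr rfl fun A _ => ?_
    rw [card_image_of_injective _ fun S T h => (Prod.ext_iff.1 h).1, card_powersetCard]
  · intro A _ B _ hAB
    exact disjoint_left.2 fun p hA hB => hAB ((hunion A p hA).symm.trans (hunion B p hB))

theorem image_fst_splittings_subset {U : Finset α} (hsub : ∀ A ∈ F, A ⊆ U) :
    (splittings k F).image Prod.fst ⊆ U.powersetCard k := by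
  rintro S hS
  obtain ⟨⟨S, T⟩, hST, rfl⟩ := mem_image.1 hS
  obtain ⟨hS, -, hF⟩ := mem_splittings.1 hST
  exact mem_powersetCard.2 ⟨subset_union_left.trans (hsub _ hF), hS⟩

theorem card_snd_of_mem_splittings (hunif : ∀ A ∈ F, #A = 2 * k) {S T : Finset α}
    (h : (S, T) ∈ splittings k F) : #T = k := by
  obtain ⟨hS, hST, hF⟩ := mem_splittings.1 h
  have := card_union_of_disjoint hST
  rw [hunif _ hF, hS] at this
  omega

theorem swap_mem_splittings (hunif : ∀ A ∈ F, #A = 2 * k) {p : Finset α × Finset α}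
    (h : p ∈ splittings k F) : p.swap ∈ splittings k F := by
  obtain ⟨-, hST, hF⟩ := mem_splittings.1 h
  exact mem_splittings.2 ⟨card_snd_of_mem_splittings hunif h, hST.symm, union_comm p.1 p.2 ▸ hF⟩

theorem union_mem_sdiff_of_mem_splittings (hunif : ∀ A ∈ F, #A = 2 * k) {S T T' U : Finset α}
    (hST : (S, T) ∈ splittings k F) (hST' : (S, T') ∈ splittings k F)
    (hTU : (T, U) ∈ splittings k F) (hT : T ≠ T') (hU : U ≠ S) : T ∪ U ∈ F \ {S ∪ T, S ∪ T'} := by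
  have hT_card := card_snd_of_mem_splittings hunif hST
  have hT'_card := card_snd_of_mem_splittings hunif hST'
  obtain ⟨-, hST, -⟩ := mem_splittings.1 hST
  obtain ⟨-, hTU, hN⟩ := mem_splittings.1 hTU
  simp only [mem_sdiff, mem_insert, mem_singleton, not_or]
  refine ⟨hN, fun h => hU ?_, fun h => hT ?_⟩
  · rw [← union_sdiff_cancel_left hTU, h, union_sdiff_cancel_right hST]
  · have hTT' : T ⊆ T' := hST.symm.left_le_of_le_sup_left (h ▸ subset_union_left : T ⊆ S ∪ T')
    exact eq_of_subset_of_card_le hTT' (by rw [hT_card, hT'_card])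

end

theorem three_mul_choose_le {k : ℕ} (hk : 0 < k) :
    3 * (2 * k).choose k ≤ 2 * (2 * k + 1).choose k := by
  have h := Nat.add_one_mul_choose_eq (2 * k) k
  rw [Nat.choose_symm_half] at h
  refine Nat.le_of_mul_le_mul_right ?_ (Nat.succ_pos k)
  calc 3 * (2 * k).choose k * (k + 1) ≤ 2 * ((2 * k + 1) * (2 * k).choose k) := by
        nlinarith [Nat.zero_le ((2 * k).choose k)]
    _ = 2 * (2 * k + 1).choose k * (k + 1) := by rw [h, mul_assoc]

section

variable {α : Type*} {k : ℕ} {F : Finset (Finset α)}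

theorem pos_of_one_lt_card (hunif : ∀ A ∈ F, #A = 2 * k) (hF : 1 < #F) : 0 < k := by
  obtain ⟨A, hA, B, hB, hAB⟩ := one_lt_card.1 hF
  by_contra! hk
  have hempty : ∀ C ∈ F, C = ∅ := fun C hC => card_eq_zero.1 (by rw [hunif C hC]; omega)
  exact hAB ((hempty A hA).trans (hempty B hB).symm)

theorem two_mul_lt_card_of_one_lt_card {U : Finset α} (hsub : ∀ A ∈ F, A ⊆ U)
    (hunif : ∀ A ∈ F, #A = 2 * k) (hF : 1 < #F) : 2 * k < #U := by
  obtain ⟨A, hA, B, hB, hAB⟩ := one_lt_card.1 hF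
  by_contra! hU
  have hfull : ∀ C ∈ F, C = U := fun C hC =>
    eq_of_subset_of_card_le (hsub C hC) (by rw [hunif C hC]; exact hU)
  exact hAB ((hfull A hA).trans (hfull B hB).symm)

theorem choose_mul_card_le_of_card_lt_four {U : Finset α} (hsub : ∀ A ∈ F, A ⊆ U)
    (hunif : ∀ A ∈ F, #A = 2 * k) (hF : #F < 4) :
    (2 * k).choose k * #F ≤ 2 * (#U).choose k := by
  obtain rfl | ⟨A, hA⟩ := F.eq_empty_or_nonempty
  · simp
  obtain hF | hF : #F ≤ 2 ∨ #F = 3 := by omega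
  · have hkU : 2 * k ≤ #U := hunif A hA ▸ card_le_card (hsub A hA)
    calc (2 * k).choose k * #F ≤ 2 * (2 * k).choose k := by rw [mul_comm]; gcongr
      _ ≤ 2 * (#U).choose k := by gcongr
  · calc (2 * k).choose k * #F = 3 * (2 * k).choose k := by rw [hF, mul_comm]
      _ ≤ 2 * (2 * k + 1).choose k := three_mul_choose_le (pos_of_one_lt_card hunif (by omega))
      _ ≤ 2 * (#U).choose k := by
        gcongr
        exact two_mul_lt_card_of_one_lt_card hsub hunif (by omega)

end

theorem TwoCancellative.union_eq_union {F : Finset (Finset ℕ)} (hcanc : TwoCancellative F)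
    {A₁ A₂ S T₁ T₂ : Finset ℕ} (hA₁ : A₁ ∈ F \ {S ∪ T₁, S ∪ T₂})
    (hA₂ : A₂ ∈ F \ {S ∪ T₁, S ∪ T₂}) (hA : A₁ ≠ A₂) (hM₁ : S ∪ T₁ ∈ F) (hM₂ : S ∪ T₂ ∈ F)
    (hT₁ : T₁ ⊆ A₁ ∪ A₂) (hT₂ : T₂ ⊆ A₁ ∪ A₂) : S ∪ T₁ = S ∪ T₂ := by
  simp only [mem_sdiff, mem_insert, mem_singleton, not_or] at hA₁ hA₂
  refine hcanc A₁ A₂ _ _ hA₁.1 hA₂.1 hM₁ hM₂ hA hA₁.2.1 hA₁.2.2 hA₂.2.1 hA₂.2.2 ?_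
  have hcover : ∀ T ⊆ A₁ ∪ A₂, A₁ ∪ A₂ ∪ (S ∪ T) = A₁ ∪ A₂ ∪ S := fun T hT => by
    rw [← union_assoc, union_right_comm, union_eq_left.2 hT]
  rw [hcover T₁ hT₁, hcover T₂ hT₂]

theorem TwoCancellative.eq_of_mem_splittings {k : ℕ} {F : Finset (Finset ℕ)}
    (hcanc : TwoCancellative F) (hunif : ∀ A ∈ F, #A = 2 * k) (hF : 4 ≤ #F)
    {S T₁ T₂ U₁ U₂ : Finset ℕ} (h₁ : (S, T₁) ∈ splittings k F) (h₂ : (S, T₂) ∈ splittings k F)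
    (h₁' : (T₁, U₁) ∈ splittings k F) (h₂' : (T₂, U₂) ∈ splittings k F)
    (hU₁ : U₁ ≠ S) (hU₂ : U₂ ≠ S) : T₁ = T₂ := by
  by_contra hT
  have hN₁ := union_mem_sdiff_of_mem_splittings hunif h₁ h₂ h₁' hT hU₁
  have hN₂ := union_mem_sdiff_of_mem_splittings hunif h₂ h₁ h₂' (Ne.symm hT) hU₂
  rw [pair_comm] at hN₂
  obtain ⟨-, hST₁, hM₁⟩ := mem_splittings.1 h₁
  obtain ⟨-, hST₂, hM₂⟩ := mem_splittings.1 h₂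
  have hM : S ∪ T₁ = S ∪ T₂ := by
    by_cases hN : T₁ ∪ U₁ = T₂ ∪ U₂
    · have hcard : 1 < #(F \ {S ∪ T₁, S ∪ T₂}) := by
        have := card_le_card_sdiff_add_card (s := F) (t := {S ∪ T₁, S ∪ T₂})
        have := card_le_two (a := S ∪ T₁) (b := S ∪ T₂)
        omega
      obtain ⟨A, hA, hAN⟩ := exists_mem_ne hcard (T₁ ∪ U₁)
      refine hcanc.union_eq_union hN₁ hA hAN.symm hM₁ hM₂ ?_ ?_
      · exact subset_union_left.trans subset_union_left
      · rw [hN]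
        exact subset_union_left.trans subset_union_left
    · exact hcanc.union_eq_union hN₁ hN₂ hN hM₁ hM₂
        (subset_union_left.trans subset_union_left) (subset_union_left.trans subset_union_right)
  exact hT (by rw [← union_sdiff_cancel_left hST₁, hM, union_sdiff_cancel_left hST₂])

theorem TwoCancellative.exists_leaf {k : ℕ} {F : Finset (Finset ℕ)}
    (hcanc : TwoCancellative F) (hunif : ∀ A ∈ F, #A = 2 * k) (hF : 4 ≤ #F)
    {Q : Finset (Finset ℕ × Finset ℕ)} (hQ : Q ⊆ splittings k F) (hne : Q.Nonempty)
    (hsymm : ∀ p ∈ Q, p.swap ∈ Q) : ∃ p ∈ Q, ∀ q ∈ Q, q.1 = p.1 → q = p := by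
  by_contra! h
  obtain ⟨⟨S, T₁⟩, h₁⟩ := hne
  obtain ⟨⟨S', T₂⟩, h₂, rfl : S' = S, hT⟩ := h _ h₁
  obtain ⟨⟨T₁', U₁⟩, h₁', rfl : T₁' = T₁, hU₁⟩ := h _ (hsymm _ h₁)
  obtain ⟨⟨T₂', U₂⟩, h₂', rfl : T₂' = T₂, hU₂⟩ := h _ (hsymm _ h₂)
  refine hT ?_
  rw [hcanc.eq_of_mem_splittings hunif hF (hQ h₁) (hQ h₂) (hQ h₁') (hQ h₂')
    (fun h => hU₁ (by rw [h]; rfl)) (fun h => hU₂ (by rw [h]; rfl))]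

/-- a `2k`-uniform 2-cancellative family on `[n]` satisfies
`binom(2k,k) * |F| ≤ 2 * binom(n,k)`, i.e. `|F| ≤ binom(n,k)/((1/2) binom(2k,k))`. -/
theorem card_le_of_two_cancellative_uniform (n k : ℕ) (F : Finset (Finset ℕ))
    (hsub : ∀ A ∈ F, A ⊆ Finset.range n) (hunif : ∀ A ∈ F, A.card = 2 * k)
    (hcanc : TwoCancellative F) :
    (2 * k).choose k * F.card ≤ 2 * n.choose k := by
  by_cases hF : 4 ≤ #F
  · calc (2 * k).choose k * #F = #(splittings k F) := by
          rw [card_splittings, sum_const_nat fun A hA => by rw [hunif A hA], mul_comm]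
      _ ≤ 2 * #((splittings k F).image Prod.fst) :=
          card_le_two_mul_card_image_fst_of_exists_leaf (fun _ => swap_mem_splittings hunif)
            fun _ hQ => hcanc.exists_leaf hunif hF hQ
      _ ≤ 2 * #((range n).powersetCard k) := by
          gcongr
          exact image_fst_splittings_subset hsub
      _ = 2 * n.choose k := by rw [card_powersetCard, card_range]
  · simpa using choose_mul_card_le_of_card_lt_four hsub hunif (by omega)
end

section
/- Let F be a (2k+1)-uniform 2-cancellative family of subsets of [n]. Then |F| ≤ binomial(n+1,k+1) / ((1/2)·binomial(2k+2,k+1)). -/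
/-!
Fix, for every `(k+1)`-set `S` covered by a member of `F`, one member `c S ⊇ S`. Code each pair
`(A, S)` with `A ∈ F` and `S` a `(k+1)`-subset of `A` by `S` itself when `A = c S`, and otherwise by
the `k`-set `A \ S` together with the new point `n`. For `|F| ≥ 4`, 2-cancellativity makes this
coding injective: two pairs with the same complement `A \ S = A' \ S'` but `A ≠ A'` would give
`B ∪ D ∪ A = B ∪ D ∪ A'` with `B = c S` and a suitable fourth member `D`. Counting gives
`|F| · C(2k+1, k+1) ≤ C(n+1, k+1)`, and `C(2k+2, k+1) = 2 · C(2k+1, k+1)`. Families with at most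
three members, which are vacuously 2-cancellative, satisfy the bound by direct estimates.
-/

open Finset

lemma Finset.union_union_eq_union_union_of_sdiff_subset {α : Type*} [DecidableEq α]
    {U A B : Finset α} (hAB : A \ B ⊆ U) (hBA : B \ A ⊆ U) : U ∪ A = U ∪ B := by
  ext x
  have hx := @hAB x
  have hx' := @hBA x
  simp only [mem_union, mem_sdiff] at hx hx' ⊢
  tauto

lemma Nat.choose_two_mul_add_two (k : ℕ) :
    (2 * k + 2).choose (k + 1) = 2 * (2 * k + 1).choose (k + 1) := by
  rw [show 2 * k + 2 = 2 * k + 1 + 1 from rfl, Nat.choose_succ_succ, Nat.choose_symm_half]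
  ring

lemma Nat.three_mul_choose_two_mul_add_two_le (k : ℕ) :
    3 * (2 * k + 2).choose (k + 1) ≤ 2 * (2 * k + 3).choose (k + 1) := by
  have hsucc : (2 * k + 3).choose (k + 1) = (2 * k + 2).choose k + (2 * k + 2).choose (k + 1) :=
    Nat.choose_succ_succ _ _
  have hmono : (2 * k + 1).choose k ≤ (2 * k + 2).choose k := Nat.choose_le_choose _ (by omega)
  have := Nat.choose_two_mul_add_two k
  rw [Nat.choose_symm_half] at this
  omega

lemma TwoCancellative.eq_of_sdiff_eq {F : Finset (Finset ℕ)} (hF : TwoCancellative F)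
    (hanti : IsAntichain (· ⊆ ·) (F : Set (Finset ℕ))) (h4 : 4 ≤ F.card)
    {A A' B C S S' : Finset ℕ} (hA : A ∈ F) (hA' : A' ∈ F) (hB : B ∈ F) (hC : C ∈ F)
    (hSB : S ⊆ B) (hS'C : S' ⊆ C) (hBA : B ≠ A) (hCA' : C ≠ A') (hdiff : A \ S = A' \ S') :
    A = A' := by
  by_contra hAA'
  have hAS : A \ A' ⊆ S := fun x hx => by
    rw [mem_sdiff] at hx
    by_contra hxS
    exact hx.2 (mem_sdiff.1 (hdiff ▸ mem_sdiff.2 ⟨hx.1, hxS⟩)).1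
  have hA'S' : A' \ A ⊆ S' := fun x hx => by
    rw [mem_sdiff] at hx
    by_contra hxS'
    exact hx.2 (mem_sdiff.1 (hdiff.symm ▸ mem_sdiff.2 ⟨hx.1, hxS'⟩)).1
  have hBA' : B ≠ A' := by
    rintro rfl
    exact hAA' <| hanti.eq hA hA' fun x hx => by
      by_contra hx'
      exact hx' (hSB (hAS (mem_sdiff.2 ⟨hx, hx'⟩)))
  have hCA : C ≠ A := by
    rintro rfl
    exact hAA' <| (hanti.eq hA' hA fun x hx => by
      by_contra hx'
      exact hx' (hS'C (hA'S' (mem_sdiff.2 ⟨hx, hx'⟩)))).symm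
  -- A family of three sets is vacuously 2-cancellative; a fourth member is needed when `C = B`.
  obtain ⟨D, hD, hDB, hDA, hDA', hA'D⟩ :
      ∃ D ∈ F, D ≠ B ∧ D ≠ A ∧ D ≠ A' ∧ A' \ A ⊆ B ∪ D := by
    by_cases hCB : C = B
    · obtain ⟨D, hD, hD3⟩ := exists_mem_notMem_of_card_lt_card
        ((card_le_three (a := B) (b := A) (c := A')).trans_lt h4)
      simp only [mem_insert, mem_singleton, not_or] at hD3
      exact ⟨D, hD, hD3.1, hD3.2.1, hD3.2.2,
        fun x hx => mem_union_left _ (hCB ▸ hS'C (hA'S' hx))⟩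
    · exact ⟨C, hC, hCB, hCA, hCA', fun x hx => mem_union_right _ (hS'C (hA'S' hx))⟩
  exact hAA' <| hF B D A A' hB hD hA hA' hDB.symm hBA hBA' hDA hDA' <|
    union_union_eq_union_union_of_sdiff_subset (fun x hx => mem_union_left _ (hSB (hAS hx))) hA'D

def coverCode (c : Finset ℕ → Finset ℕ) (z : ℕ) (p : Σ _ : Finset ℕ, Finset ℕ) : Finset ℕ :=
  if c p.2 = p.1 then p.2 else insert z (p.1 \ p.2)

lemma TwoCancellative.injOn_coverCode {F : Finset (Finset ℕ)} (hF : TwoCancellative F)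
    (hanti : IsAntichain (· ⊆ ·) (F : Set (Finset ℕ))) (h4 : 4 ≤ F.card)
    {c : Finset ℕ → Finset ℕ} (hc : ∀ S, ∀ A ∈ F, S ⊆ A → c S ∈ F ∧ S ⊆ c S)
    {z : ℕ} (hz : ∀ A ∈ F, z ∉ A) :
    Set.InjOn (coverCode c z) {p | p.1 ∈ F ∧ p.2 ⊆ p.1} := by
  rintro ⟨A, S⟩ ⟨hA, hSA⟩ ⟨A', S'⟩ ⟨hA', hS'A'⟩ h
  simp only at hA hSA hA' hS'A'
  by_cases hcA : c S = A <;> by_cases hcA' : c S' = A' <;>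
    simp only [coverCode, hcA, hcA', if_true, if_false] at h
  · subst h
    rw [← hcA, ← hcA']
  · exact absurd (hSA (h ▸ mem_insert_self z _)) (hz A hA)
  · exact absurd (hS'A' (h ▸ mem_insert_self z _)) (hz A' hA')
  · have hdiff : A \ S = A' \ S' := by
      rw [← erase_insert fun hzA => hz A hA (mem_sdiff.1 hzA).1, h,
        erase_insert fun hzA => hz A' hA' (mem_sdiff.1 hzA).1]
    obtain rfl : A = A' := hF.eq_of_sdiff_eq hanti h4 hA hA' (hc S A hA hSA).1
      (hc S' A' hA' hS'A').1 (hc S A hA hSA).2 (hc S' A' hA' hS'A').2 hcA hcA' hdiff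
    obtain rfl : S = S' := by
      rw [← Finset.sdiff_sdiff_eq_self hSA, hdiff, Finset.sdiff_sdiff_eq_self hS'A']
    rfl

lemma TwoCancellative.card_mul_choose_le {n k : ℕ} {F : Finset (Finset ℕ)}
    (hF : TwoCancellative F) (hsub : ∀ A ∈ F, A ⊆ range n) (hunif : ∀ A ∈ F, A.card = 2 * k + 1)
    (h4 : 4 ≤ F.card) :
    F.card * (2 * k + 1).choose (k + 1) ≤ (n + 1).choose (k + 1) := by
  have hcover (S : Finset ℕ) : ∃ B, ∀ A ∈ F, S ⊆ A → B ∈ F ∧ S ⊆ B := by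
    by_cases h : ∃ A ∈ F, S ⊆ A
    · obtain ⟨A, hA, hSA⟩ := h
      exact ⟨A, fun _ _ _ => ⟨hA, hSA⟩⟩
    · exact ⟨∅, fun A hA hSA => absurd ⟨A, hA, hSA⟩ h⟩
  choose c hc using hcover
  have hanti : IsAntichain (· ⊆ ·) (F : Set (Finset ℕ)) :=
    Set.Sized.isAntichain (r := 2 * k + 1) fun A hA => hunif A hA
  have hz (A) (hA : A ∈ F) : n ∉ A := fun hn => notMem_range_self (hsub A hA hn)
  have hrange (A) (hA : A ∈ F) : A ⊆ range (n + 1) :=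
    (hsub A hA).trans (range_subset_range.2 n.le_succ)
  have hmaps : Set.MapsTo (coverCode c n) (F.sigma fun A => A.powersetCard (k + 1))
      ((range (n + 1)).powersetCard (k + 1)) := by
    rintro ⟨A, S⟩ hp
    simp only [coe_sigma, Set.mem_sigma_iff, mem_coe, mem_powersetCard] at hp
    obtain ⟨hA, hSA, hS⟩ := hp
    simp only [coverCode, mem_coe, mem_powersetCard]
    split_ifs
    · exact ⟨hSA.trans (hrange A hA), hS⟩
    · refine ⟨insert_subset (mem_range.2 n.lt_succ_self) (sdiff_subset.trans (hrange A hA)), ?_⟩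
      rw [card_insert_of_notMem fun h => hz A hA (mem_sdiff.1 h).1, card_sdiff_of_subset hSA,
        hunif A hA, hS]
      omega
  have hinj : Set.InjOn (coverCode c n) (F.sigma fun A => A.powersetCard (k + 1)) :=
    (hF.injOn_coverCode hanti h4 hc hz).mono fun p hp => by
    rw [mem_coe, mem_sigma, mem_powersetCard] at hp
    exact ⟨hp.1, hp.2.1⟩
  have := card_le_card_of_injOn _ hmaps hinj
  rwa [card_sigma, sum_congr rfl fun A hA => by rw [card_powersetCard, hunif A hA], sum_const,
    smul_eq_mul, card_powersetCard, card_range] at this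

lemma choose_mul_card_le_of_card_le_three {n k : ℕ} {F : Finset (Finset ℕ)}
    (hsub : ∀ A ∈ F, A ⊆ range n) (hunif : ∀ A ∈ F, A.card = 2 * k + 1) (h3 : F.card ≤ 3) :
    (2 * k + 2).choose (k + 1) * F.card ≤ 2 * (n + 1).choose (k + 1) := by
  have hcard : F.card ≤ n.choose (2 * k + 1) := by
    simpa using card_le_card fun A hA => mem_powersetCard.2 ⟨hsub A hA, hunif A hA⟩
  have hn₁ (hpos : 0 < F.card) : 2 * k + 1 ≤ n := by
    by_contra hn
    rw [Nat.choose_eq_zero_of_lt (by omega)] at hcard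
    omega
  have hn₂ (htwo : 1 < F.card) : 2 * k + 2 ≤ n := by
    rcases (hn₁ (by omega)).eq_or_lt with rfl | hlt
    · rw [Nat.choose_self] at hcard
      omega
    · omega
  rcases Nat.lt_or_ge F.card 3 with hlt | hge
  · rcases Nat.eq_zero_or_pos F.card with h0 | hpos
    · simp [h0]
    · calc (2 * k + 2).choose (k + 1) * F.card ≤ (n + 1).choose (k + 1) * 2 :=
            Nat.mul_le_mul (Nat.choose_le_choose _ (by have := hn₁ hpos; omega)) (by omega)
        _ = 2 * (n + 1).choose (k + 1) := mul_comm _ _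
  · rw [show F.card = 3 by omega, mul_comm]
    calc 3 * (2 * k + 2).choose (k + 1) ≤ 2 * (2 * k + 3).choose (k + 1) :=
          Nat.three_mul_choose_two_mul_add_two_le k
      _ ≤ 2 * (n + 1).choose (k + 1) :=
          Nat.mul_le_mul_left 2 (Nat.choose_le_choose _ (by have := hn₂ (by omega); omega))

/-- a `(2k+1)`-uniform 2-cancellative family on `[n]` satisfies
`|F| ≤ binom(n+1,k+1)/((1/2) binom(2k+2,k+1))`. -/
theorem card_le_of_two_cancellative_odd_uniform (n k : ℕ) (F : Finset (Finset ℕ))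
    (hsub : ∀ A ∈ F, A ⊆ Finset.range n) (hunif : ∀ A ∈ F, A.card = 2 * k + 1)
    (hcanc : TwoCancellative F) :
    (2 * k + 2).choose (k + 1) * F.card ≤ 2 * (n + 1).choose (k + 1) := by
  rcases Nat.lt_or_ge F.card 4 with hsmall | hlarge
  · exact choose_mul_card_le_of_card_le_three hsub hunif (by omega)
  · calc (2 * k + 2).choose (k + 1) * F.card
          = 2 * (F.card * (2 * k + 1).choose (k + 1)) := by
            rw [Nat.choose_two_mul_add_two]
            ring
      _ ≤ 2 * (n + 1).choose (k + 1) :=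
          Nat.mul_le_mul_left 2 (hcanc.card_mul_choose_le hsub hunif hlarge)
end

section
/- c(n,2) < 9·√n·(5/4)^n for all n ≥ 1, where c(n,2) is the maximum size of a 2-cancellative family of subsets of [n]. -/
/-- A family is `t`-cancellative: for all `t+2` distinct members `A 0, …, A (t-1), B, C`,
`(⋃ i, A i) ∪ B = (⋃ i, A i) ∪ C` implies `B = C`. -/
def IsTCancellative (t : ℕ) (F : Finset (Finset ℕ)) : Prop :=
  ∀ (A : Fin t → Finset ℕ) (B C : Finset ℕ),
    (∀ i, A i ∈ F) → B ∈ F → C ∈ F →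
    Function.Injective A → (∀ i, A i ≠ B) → (∀ i, A i ≠ C) →
    Finset.univ.biUnion A ∪ B = Finset.univ.biUnion A ∪ C → B = C

/-- A family is `g`-cover-free: for `g+1` distinct members `A 0, …, A g`,
`A 0` is not contained in `A 1 ∪ … ∪ A g`. -/
def IsCoverFree (g : ℕ) (F : Finset (Finset ℕ)) : Prop :=
  ∀ (A : Fin (g + 1) → Finset ℕ), (∀ i, A i ∈ F) → Function.Injective A →
    ¬ A 0 ⊆ (Finset.univ.erase 0).biUnion A

/-- `c(n,t)`: maximum size of a `t`-cancellative family on `[n]`. -/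
noncomputable def cancelMax (n t : ℕ) : ℕ :=
  sSup {m | ∃ F : Finset (Finset ℕ),
    (∀ A ∈ F, A ⊆ Finset.range n) ∧ IsTCancellative t F ∧ F.card = m}

/-- `C(n,g)`: maximum size of a `g`-cover-free family on `[n]`. -/
noncomputable def coverFreeMax (n g : ℕ) : ℕ :=
  sSup {m | ∃ F : Finset (Finset ℕ),
    (∀ A ∈ F, A ⊆ Finset.range n) ∧ IsCoverFree g F ∧ F.card = m}

/-- `c_r(n,t)`: maximum size of an `r`-uniform `t`-cancellative family on `[n]`. -/
noncomputable def cUnifMax (n r t : ℕ) : ℕ :=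
  sSup {m | ∃ F : Finset (Finset ℕ),
    (∀ A ∈ F, A ⊆ Finset.range n ∧ A.card = r) ∧ IsTCancellative t F ∧ F.card = m}

/-!
Split the family into layers of equal size. Two distinct members `F, F' ⊇ v` whose remainders
`F \ v`, `F' \ v` are both covered by two further members `A₁, A₂` violate 2-cancellativity,
since `A₁ ∪ A₂ ∪ F = A₁ ∪ A₂ ∪ v = A₁ ∪ A₂ ∪ F'`. Hence in a `2k`-uniform layer `𝓕`, sending
each pair `(F, S)` with `S` a `k`-subset of `F` to a suitable one of the halves `S`, `F \ S`
is at most two-to-one, so `|𝓕| C(2k, k) ≤ 2 C(n, k)`; adjoining a new point reduces odd layers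
to this case on `n + 1` points. With `C(2k, k) ≥ 4^k / (2√k)` and `k ≤ n / 2`, the binomial
theorem sums the layer bounds to `2√(2n) (5/4)^n + 2√(2n + 2) (5/4)^(n+1) < 9√n (5/4)^n`.
-/

open Finset

theorem Nat.sixteen_pow_le_four_mul_mul_centralBinom_sq {k : ℕ} (hk : 1 ≤ k) :
    16 ^ k ≤ 4 * k * k.centralBinom ^ 2 := by
  induction k, hk using Nat.le_induction with
  | base => decide
  | succ k _ ih =>
    refine Nat.le_of_mul_le_mul_right (c := (k + 1) ^ 2) ?_ (by positivity)
    calc 16 ^ (k + 1) * (k + 1) ^ 2 = 16 * (k + 1) ^ 2 * 16 ^ k := by ring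
      _ ≤ 16 * (k + 1) ^ 2 * (4 * k * k.centralBinom ^ 2) := by gcongr
      _ = 16 * (k + 1) * k.centralBinom ^ 2 * (4 * k * (k + 1)) := by ring
      _ ≤ 16 * (k + 1) * k.centralBinom ^ 2 * (2 * k + 1) ^ 2 := by gcongr; nlinarith
      _ = 4 * (k + 1) * (2 * (2 * k + 1) * k.centralBinom) ^ 2 := by ring
      _ = 4 * (k + 1) * (k + 1).centralBinom ^ 2 * (k + 1) ^ 2 := by
        rw [← Nat.succ_mul_centralBinom_succ]; ring

theorem Nat.four_pow_le_two_mul_sqrt_mul_centralBinom {k : ℕ} (hk : 1 ≤ k) :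
    (4 : ℝ) ^ k ≤ 2 * √k * k.centralBinom := by
  refine le_of_pow_le_pow_left₀ two_ne_zero (by positivity) ?_
  rw [← pow_mul, mul_comm k, pow_mul, mul_pow, mul_pow, Real.sq_sqrt k.cast_nonneg]
  exact_mod_cast Nat.sixteen_pow_le_four_mul_mul_centralBinom_sq hk

theorem sum_range_choose_mul_quarter_pow (n : ℕ) :
    ∑ k ∈ range (n + 1), (n.choose k : ℝ) * (1 / 4) ^ k = (5 / 4) ^ n := by
  rw [show (5 / 4 : ℝ) = 1 / 4 + 1 by norm_num, add_pow]
  exact sum_congr rfl fun k _ => by ring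

theorem two_mul_sqrt_two_mul_add_lt_nine_mul_sqrt {n : ℕ} (hn : 1 ≤ n) :
    2 * √(2 * n) * (5 / 4) ^ n + 2 * √(2 * (n + 1)) * (5 / 4) ^ (n + 1) <
      9 * √n * (5 / 4) ^ n := by
  have hn' : (1 : ℝ) ≤ n := by exact_mod_cast hn
  have h4n : √(4 * n) = 2 * √n := by
    rw [Real.sqrt_mul' _ (by positivity), show √4 = (2 : ℝ) by norm_num]
  have heven : √(2 * n) < 2 * √n := h4n ▸ Real.sqrt_lt_sqrt (by positivity) (by linarith)
  have hodd : √(2 * (n + 1)) ≤ 2 * √n := h4n ▸ Real.sqrt_le_sqrt (by linarith)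
  have hp : (0 : ℝ) < (5 / 4) ^ n := by positivity
  rw [pow_succ]
  nlinarith

theorem card_le_sum_card_filter_card_eq_two_mul_add {α : Type*} [DecidableEq α]
    {F : Finset (Finset α)} {n : ℕ} (hF : ∀ A ∈ F, #A ≤ n) :
    #F ≤ ∑ k ∈ range (n + 1), (#{A ∈ F | #A = 2 * k} + #{A ∈ F | #A = 2 * k + 1}) := by
  rw [card_eq_sum_card_fiberwise (f := fun A => #A / 2) (t := range (n + 1))
    fun A hA => mem_range.2 (Nat.lt_succ_of_le ((Nat.div_le_self _ _).trans (hF A hA)))]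
  refine sum_le_sum fun k _ => ?_
  calc #{A ∈ F | #A / 2 = k} = #({A ∈ F | #A = 2 * k} ∪ {A ∈ F | #A = 2 * k + 1}) := by
        rw [← filter_or]; exact congrArg card (filter_congr fun A _ => by omega)
    _ ≤ _ := card_union_le _ _

section Degree

variable {α : Type*} [DecidableEq α] {𝓕 : Finset (Finset α)} {F S x : Finset α}

def setDegree (𝓕 : Finset (Finset α)) (S : Finset α) : ℕ := #{A ∈ 𝓕 | S ⊆ A}

-- With this choice, a set `x` lying in at most one member `F` is chosen only for `(F, x)` and
-- `(F, F \ x)`, and a set lying in two members only for pairs `(F, x)` with `F \ x` in two members.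
def halfChoice (𝓕 : Finset (Finset α)) (F S : Finset α) : Finset α :=
  if 1 < setDegree 𝓕 S ∧ setDegree 𝓕 (F \ S) ≤ 1 then F \ S else S

theorem halfChoice_eq_or (𝓕 : Finset (Finset α)) (F S : Finset α) :
    halfChoice 𝓕 F S = S ∨ halfChoice 𝓕 F S = F \ S := by
  unfold halfChoice; split_ifs <;> simp

theorem subset_and_eq_or_of_halfChoice_eq (hS : S ⊆ F) (h : halfChoice 𝓕 F S = x) :
    x ⊆ F ∧ (S = x ∨ S = F \ x) := by
  subst h
  rcases halfChoice_eq_or 𝓕 F S with h | h <;> rw [h]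
  · exact ⟨hS, Or.inl rfl⟩
  · exact ⟨sdiff_subset, Or.inr (Finset.sdiff_sdiff_eq_self hS).symm⟩

theorem eq_and_one_lt_of_halfChoice_eq (h : halfChoice 𝓕 F S = x) (hx : 1 < setDegree 𝓕 x) :
    S = x ∧ 1 < setDegree 𝓕 (F \ x) := by
  unfold halfChoice at h
  split_ifs at h with hS
  · subst h; omega
  · subst h; exact ⟨rfl, by omega⟩

theorem IsAntichain.exists_mem_sdiff_subset_not_subset
    (h𝓕 : IsAntichain (· ⊆ ·) (𝓕 : Set (Finset α))) {v : Finset α} (hF : F ∈ 𝓕)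
    (hd : 1 < setDegree 𝓕 (F \ v)) : ∃ G ∈ 𝓕, F \ v ⊆ G ∧ ¬ v ⊆ G := by
  obtain ⟨G, hG, hGF⟩ := exists_mem_ne hd F
  obtain ⟨hG𝓕, hFG⟩ := mem_filter.1 hG
  refine ⟨G, hG𝓕, hFG, fun hvG => hGF (h𝓕.eq hF hG𝓕 ?_).symm⟩
  grind

end Degree

theorem isTCancellative_two_iff {𝓕 : Finset (Finset ℕ)} : IsTCancellative 2 𝓕 ↔
    ∀ A₁ ∈ 𝓕, ∀ A₂ ∈ 𝓕, ∀ B ∈ 𝓕, ∀ C ∈ 𝓕, A₁ ≠ A₂ → A₁ ≠ B → A₁ ≠ C → A₂ ≠ B → A₂ ≠ C →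
      A₁ ∪ A₂ ∪ B = A₁ ∪ A₂ ∪ C → B = C := by
  have biUnion_fin_two (A : Fin 2 → Finset ℕ) : univ.biUnion A = A 0 ∪ A 1 := by
    ext; simp [Fin.exists_fin_two]
  constructor
  · intro h A₁ hA₁ A₂ hA₂ B hB C hC h12 h1B h1C h2B h2C hU
    refine h ![A₁, A₂] B C (by simp [Fin.forall_fin_two, *]) hB hC ?_
      (by simp [Fin.forall_fin_two, *]) (by simp [Fin.forall_fin_two, *])
      (by simpa [biUnion_fin_two] using hU)
    intro i j hij
    fin_cases i <;> fin_cases j <;> simp_all [eq_comm]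
  · intro h A B C hA hB hC hinj hAB hAC hU
    exact h _ (hA 0) _ (hA 1) B hB C hC (hinj.ne (by decide)) (hAB 0) (hAC 0) (hAB 1) (hAC 1)
      (by rwa [biUnion_fin_two] at hU)

namespace IsTCancellative

variable {t k : ℕ} {𝓕 𝓖 : Finset (Finset ℕ)} {s : Finset ℕ}

theorem mono (h : IsTCancellative t 𝓖) (h𝓕 : 𝓕 ⊆ 𝓖) : IsTCancellative t 𝓕 :=
  fun A B C hA hB hC => h A B C (fun i => h𝓕 (hA i)) (h𝓕 hB) (h𝓕 hC)

theorem image_insert {a : ℕ} (h : IsTCancellative 2 𝓕) (ha : ∀ A ∈ 𝓕, a ∉ A) :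
    IsTCancellative 2 (𝓕.image (insert a)) := by
  rw [isTCancellative_two_iff] at h ⊢
  simp only [forall_mem_image, ← insert_union_distrib]
  intro A₁ hA₁ A₂ hA₂ B hB C hC h12 h1B h1C h2B h2C hU
  have ha' : ∀ X ∈ 𝓕, a ∉ A₁ ∪ A₂ ∪ X := by simp_all
  rw [h A₁ hA₁ A₂ hA₂ B hB C hC (ne_of_apply_ne _ h12) (ne_of_apply_ne _ h1B)
    (ne_of_apply_ne _ h1C) (ne_of_apply_ne _ h2B) (ne_of_apply_ne _ h2C)
    (by rw [← erase_insert (ha' B hB), hU, erase_insert (ha' C hC)])]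

theorem eq_of_sdiff_subset_union (h : IsTCancellative 2 𝓕) {A₁ A₂ F F' v : Finset ℕ}
    (hA₁ : A₁ ∈ 𝓕) (hA₂ : A₂ ∈ 𝓕) (hF : F ∈ 𝓕) (hF' : F' ∈ 𝓕) (h12 : A₁ ≠ A₂)
    (h1F : A₁ ≠ F) (h1F' : A₁ ≠ F') (h2F : A₂ ≠ F) (h2F' : A₂ ≠ F')
    (hvF : v ⊆ F) (hvF' : v ⊆ F') (hy : F \ v ⊆ A₁ ∪ A₂) (hy' : F' \ v ⊆ A₁ ∪ A₂) :
    F = F' := by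
  have union_eq {X : Finset ℕ} (hvX : v ⊆ X) (hX : X \ v ⊆ A₁ ∪ A₂) :
      A₁ ∪ A₂ ∪ X = A₁ ∪ A₂ ∪ v := by grind
  exact isTCancellative_two_iff.1 h A₁ hA₁ A₂ hA₂ F hF F' hF' h12 h1F h1F' h2F h2F'
    ((union_eq hvF hy).trans (union_eq hvF' hy').symm)

theorem card_filter_one_lt_setDegree_sdiff_le_two (h : IsTCancellative 2 𝓕)
    (h𝓕 : IsAntichain (· ⊆ ·) (𝓕 : Set (Finset ℕ))) (v : Finset ℕ) :
    #{F ∈ 𝓕 | v ⊆ F ∧ 1 < setDegree 𝓕 (F \ v)} ≤ 2 := by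
  by_contra! hlt
  obtain ⟨F₁, hF₁, F₂, hF₂, F₃, hF₃, h12, h13, h23⟩ := two_lt_card.1 hlt
  simp only [mem_filter] at hF₁ hF₂ hF₃
  obtain ⟨G₁, hG₁, hyG₁, hvG₁⟩ := h𝓕.exists_mem_sdiff_subset_not_subset hF₁.1 hF₁.2.2
  obtain ⟨G₂, hG₂, hyG₂, hvG₂⟩ := h𝓕.exists_mem_sdiff_subset_not_subset hF₂.1 hF₂.2.2
  have hne {G F : Finset ℕ} (hvG : ¬ v ⊆ G) (hvF : v ⊆ F) : G ≠ F := by rintro rfl; exact hvG hvF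
  -- `G₁, G₂` cover both remainders; if they coincide, `G₁, F₃` do.
  by_cases hG : G₁ = G₂
  · subst hG
    exact h12 (h.eq_of_sdiff_subset_union hG₁ hF₃.1 hF₁.1 hF₂.1 (hne hvG₁ hF₃.2.1)
      (hne hvG₁ hF₁.2.1) (hne hvG₁ hF₂.2.1) h13.symm h23.symm hF₁.2.1 hF₂.2.1
      (hyG₁.trans subset_union_left) (hyG₂.trans subset_union_left))
  · exact h12 (h.eq_of_sdiff_subset_union hG₁ hG₂ hF₁.1 hF₂.1 hG
      (hne hvG₁ hF₁.2.1) (hne hvG₁ hF₂.2.1) (hne hvG₂ hF₁.2.1) (hne hvG₂ hF₂.2.1) hF₁.2.1 hF₂.2.1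
      (hyG₁.trans subset_union_left) (hyG₂.trans subset_union_right))

theorem card_filter_halfChoice_eq_le_two (h : IsTCancellative 2 𝓕)
    (h𝓕 : IsAntichain (· ⊆ ·) (𝓕 : Set (Finset ℕ)))
    {P : Finset ((_ : Finset ℕ) × Finset ℕ)} (hP : ∀ p ∈ P, p.1 ∈ 𝓕 ∧ p.2 ⊆ p.1)
    (x : Finset ℕ) : #{p ∈ P | halfChoice 𝓕 p.1 p.2 = x} ≤ 2 := by
  by_cases hx : 1 < setDegree 𝓕 x
  · set T := {F ∈ 𝓕 | x ⊆ F ∧ 1 < setDegree 𝓕 (F \ x)}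
    calc #{p ∈ P | halfChoice 𝓕 p.1 p.2 = x}
        ≤ #(T.image fun F => (⟨F, x⟩ : (_ : Finset ℕ) × Finset ℕ)) := by
          refine card_le_card fun p hp => ?_
          obtain ⟨hpP, hpx⟩ := mem_filter.1 hp
          obtain ⟨hpS, hpd⟩ := eq_and_one_lt_of_halfChoice_eq hpx hx
          have hxF := (subset_and_eq_or_of_halfChoice_eq (hP p hpP).2 hpx).1
          exact mem_image.2 ⟨p.1, mem_filter.2 ⟨(hP p hpP).1, hxF, hpd⟩, by rw [← hpS]⟩
      _ ≤ #T := card_image_le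
      _ ≤ 2 := h.card_filter_one_lt_setDegree_sdiff_le_two h𝓕 x
  · calc #{p ∈ P | halfChoice 𝓕 p.1 p.2 = x}
        ≤ #({F ∈ 𝓕 | x ⊆ F}.sigma fun F => {x, F \ x}) := by
          refine card_le_card fun p hp => ?_
          obtain ⟨hpP, hpx⟩ := mem_filter.1 hp
          obtain ⟨hxF, hpS⟩ := subset_and_eq_or_of_halfChoice_eq (hP p hpP).2 hpx
          simpa [(hP p hpP).1, hxF] using hpS
      _ ≤ ∑ _F ∈ {F ∈ 𝓕 | x ⊆ F}, 2 := by
          rw [card_sigma]; exact sum_le_sum fun F _ => card_le_two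
      _ ≤ 2 := by rw [sum_const, smul_eq_mul]; unfold setDegree at hx; omega

theorem card_mul_centralBinom_le (h : IsTCancellative 2 𝓕) (hs : ∀ A ∈ 𝓕, A ⊆ s)
    (hk : (𝓕 : Set (Finset ℕ)).Sized (2 * k)) : #𝓕 * k.centralBinom ≤ 2 * (#s).choose k := by
  set P := 𝓕.sigma fun F => F.powersetCard k
  have hP : ∀ p ∈ P, p.1 ∈ 𝓕 ∧ p.2 ⊆ p.1 := fun p hp => by
    simp only [P, mem_sigma, mem_powersetCard] at hp; exact ⟨hp.1, hp.2.1⟩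
  have hcard : #P = #𝓕 * k.centralBinom := by
    rw [card_sigma, sum_const_nat fun F hF => by rw [card_powersetCard, hk hF],
      Nat.centralBinom_eq_two_mul_choose]
  have hmaps : ∀ p ∈ P, halfChoice 𝓕 p.1 p.2 ∈ s.powersetCard k := by
    rintro ⟨F, S⟩ hp
    simp only [P, mem_sigma, mem_powersetCard] at hp
    obtain ⟨hF, hSF, hSk⟩ := hp
    rcases halfChoice_eq_or 𝓕 F S with h' | h' <;> rw [h', mem_powersetCard]
    · exact ⟨hSF.trans (hs F hF), hSk⟩
    · exact ⟨sdiff_subset.trans (hs F hF), by rw [card_sdiff_of_subset hSF, hk hF]; omega⟩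
  simpa [hcard, mul_comm] using
    card_le_mul_card_image_of_maps_to hmaps 2 fun x _ => h.card_filter_halfChoice_eq_le_two
      hk.isAntichain hP x

theorem card_le_sqrt_mul_choose_mul_quarter_pow (h : IsTCancellative 2 𝓕)
    (hs : ∀ A ∈ 𝓕, A ⊆ s) (hk : (𝓕 : Set (Finset ℕ)).Sized (2 * k)) (hs₁ : 1 ≤ #s) :
    (#𝓕 : ℝ) ≤ 2 * √(2 * #s) * (#s).choose k * (1 / 4) ^ k := by
  have hcast : (#𝓕 : ℝ) * k.centralBinom ≤ 2 * (#s).choose k := by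
    exact_mod_cast h.card_mul_centralBinom_le hs hk
  have hsqrt : 1 ≤ √(2 * #s) := Real.one_le_sqrt.2 (by norm_cast; omega)
  suffices key : (#𝓕 : ℝ) * 4 ^ k ≤ 2 * √(2 * #s) * (#s).choose k by
    calc (#𝓕 : ℝ) = #𝓕 * 4 ^ k * (1 / 4) ^ k := by rw [mul_assoc, ← mul_pow]; norm_num
      _ ≤ _ := by gcongr
  rcases Nat.eq_zero_or_pos k with rfl | hk₀
  · simp only [Nat.centralBinom_zero, Nat.choose_zero_right, Nat.cast_one, mul_one,
      pow_zero] at hcast ⊢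
    linarith
  rcases 𝓕.eq_empty_or_nonempty with rfl | ⟨A, hA⟩
  · simp only [card_empty, Nat.cast_zero, zero_mul]; positivity
  have hks : (4 * k : ℝ) ≤ 2 * #s := by
    have := card_le_card (hs A hA); rw [hk hA] at this; norm_cast; omega
  calc (#𝓕 : ℝ) * 4 ^ k ≤ #𝓕 * (2 * √k * k.centralBinom) := by
        gcongr; exact Nat.four_pow_le_two_mul_sqrt_mul_centralBinom hk₀
    _ = √(4 * k) * (#𝓕 * k.centralBinom) := by
        rw [Real.sqrt_mul' _ k.cast_nonneg, show √4 = (2 : ℝ) by norm_num]; ring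
    _ ≤ √(2 * #s) * (2 * (#s).choose k) := by gcongr
    _ = 2 * √(2 * #s) * (#s).choose k := by ring

theorem card_le_sqrt_mul_choose_succ_mul_quarter_pow (h : IsTCancellative 2 𝓕)
    (hs : ∀ A ∈ 𝓕, A ⊆ s) {a : ℕ} (ha : a ∉ s) (hk : (𝓕 : Set (Finset ℕ)).Sized (2 * k + 1)) :
    (#𝓕 : ℝ) ≤ 2 * √(2 * (#s + 1)) * (#s + 1).choose (k + 1) * (1 / 4) ^ (k + 1) := by
  have ha𝓕 : ∀ A ∈ 𝓕, a ∉ A := fun A hA haA => ha (hs A hA haA)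
  have hinj : Set.InjOn (insert a) (𝓕 : Set (Finset ℕ)) := fun A hA B hB hAB => by
    rw [← erase_insert (ha𝓕 A hA), hAB, erase_insert (ha𝓕 B hB)]
  have hsized : (↑(𝓕.image (insert a)) : Set (Finset ℕ)).Sized (2 * (k + 1)) := by
    simp only [Set.Sized, coe_image, Set.forall_mem_image, mem_coe]
    intro A hA; rw [card_insert_of_notMem (ha𝓕 A hA), hk hA]; ring
  have himage := (h.image_insert ha𝓕).card_le_sqrt_mul_choose_mul_quarter_pow (s := insert a s)
    (by simpa using fun A hA => insert_subset_insert a (hs A hA)) hsized (by simp)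
  rwa [card_image_of_injOn hinj, card_insert_of_notMem ha, Nat.cast_add_one] at himage

theorem card_lt_nine_mul_sqrt_mul_pow {F : Finset (Finset ℕ)} {n : ℕ} (h : IsTCancellative 2 F)
    (hF : ∀ A ∈ F, A ⊆ range n) (hn : 1 ≤ n) :
    (#F : ℝ) < 9 * √n * (5 / 4) ^ n := by
  have hlayer (r : ℕ) : IsTCancellative 2 {A ∈ F | #A = r} ∧ (∀ A ∈ {A ∈ F | #A = r}, A ⊆ range n)
      ∧ (({A ∈ F | #A = r} : Finset _) : Set (Finset ℕ)).Sized r :=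
    ⟨h.mono (filter_subset _ _), fun A hA => hF A (mem_filter.1 hA).1,
      fun A hA => (mem_filter.1 hA).2⟩
  have heven (k : ℕ) :
      (#{A ∈ F | #A = 2 * k} : ℝ) ≤ 2 * √(2 * n) * n.choose k * (1 / 4) ^ k := by
    obtain ⟨hc, hs, hk⟩ := hlayer (2 * k)
    simpa using hc.card_le_sqrt_mul_choose_mul_quarter_pow hs hk (by simpa using hn)
  have hodd (k : ℕ) : (#{A ∈ F | #A = 2 * k + 1} : ℝ) ≤
      2 * √(2 * (n + 1)) * (n + 1).choose (k + 1) * (1 / 4) ^ (k + 1) := by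
    obtain ⟨hc, hs, hk⟩ := hlayer (2 * k + 1)
    simpa using hc.card_le_sqrt_mul_choose_succ_mul_quarter_pow hs (a := n) (by simp) hk
  have hsplit := card_le_sum_card_filter_card_eq_two_mul_add fun A hA =>
    (card_le_card (hF A hA)).trans_eq (card_range n)
  calc (#F : ℝ) ≤ ∑ k ∈ range (n + 1), (2 * √(2 * n) * n.choose k * (1 / 4) ^ k +
          2 * √(2 * (n + 1)) * (n + 1).choose (k + 1) * (1 / 4) ^ (k + 1)) := by
        refine (Nat.cast_le.2 hsplit).trans ?_
        push_cast
        exact sum_le_sum fun k _ => add_le_add (heven k) (hodd k)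
    _ ≤ 2 * √(2 * n) * (5 / 4) ^ n + 2 * √(2 * (n + 1)) * (5 / 4) ^ (n + 1) := by
        simp only [sum_add_distrib, mul_assoc, ← mul_sum, sum_range_choose_mul_quarter_pow]
        gcongr
        rw [← sum_range_choose_mul_quarter_pow, sum_range_succ' _ (n + 1)]
        exact le_add_of_nonneg_right (by positivity)
    _ < 9 * √n * (5 / 4) ^ n := two_mul_sqrt_two_mul_add_lt_nine_mul_sqrt hn

end IsTCancellative

theorem exists_card_eq_cancelMax (n t : ℕ) : ∃ F : Finset (Finset ℕ),
    (∀ A ∈ F, A ⊆ range n) ∧ IsTCancellative t F ∧ #F = cancelMax n t := by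
  refine Nat.sSup_mem (s := {m | ∃ F : Finset (Finset ℕ),
    (∀ A ∈ F, A ⊆ range n) ∧ IsTCancellative t F ∧ #F = m})
    ⟨0, ∅, by simp, fun _ _ _ _ hB => absurd hB (notMem_empty _), rfl⟩ ⟨2 ^ n, ?_⟩
  rintro m ⟨F, hF, -, rfl⟩
  simpa using card_le_card fun A hA => mem_powerset.2 (hF A hA)

/-- `c(n,2) < 9 √n (5/4)^n` for all `n ≥ 1`. -/
theorem cancelMax_two_lt (n : ℕ) (hn : 1 ≤ n) :
    (cancelMax n 2 : ℝ) < 9 * Real.sqrt n * (5 / 4) ^ n := by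
  obtain ⟨F, hF, hcanc, hcard⟩ := exists_card_eq_cancelMax n 2
  rw [← hcard]
  exact hcanc.card_lt_nine_mul_sqrt_mul_pow hF hn
end

section
/- For all integers r ≥ 1 and t ≥ 0, binomial(r(t+2), r) > (1/(3√r)) · ((t+2)^{t+2}/(t+1)^{t+1})^r. -/
/-!
Stirling's formula with explicit constants, `√(2πn) (n/e)^n ≤ n! ≤ e √n (n/e)^n` for `n ≥ 1`,
gives `binom(r+k, r) ≥ (√(2π)/e²) √((r+k)/(rk)) (r+k)^(r+k)/(r^r k^k)`. For `k = r(t+1)` the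
power ratio is `((t+2)^(t+2)/(t+1)^(t+1))^r`, the square root is at least `1/√r`, and
`√(2π)/e² > 1/3`.
-/

open Real Nat Stirling

theorem Stirling.stirlingSeq_le_stirlingSeq_one {n : ℕ} (hn : n ≠ 0) :
    stirlingSeq n ≤ stirlingSeq 1 :=
  match n, hn with
  | n + 1, _ => stirlingSeq'_antitone (Nat.zero_le n)

theorem Stirling.factorial_le_exp_one_mul_sqrt_mul_pow {n : ℕ} (hn : n ≠ 0) :
    (n ! : ℝ) ≤ exp 1 * √n * (n / exp 1) ^ n := by
  have hpos : 0 < √(2 * n : ℝ) * (n / exp 1) ^ n := by positivity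
  have h := stirlingSeq_le_stirlingSeq_one hn
  rw [stirlingSeq_one, stirlingSeq, div_le_iff₀ hpos] at h
  calc (n ! : ℝ) ≤ exp 1 / √2 * (√(2 * n : ℝ) * (n / exp 1) ^ n) := h
    _ = exp 1 * √n * (n / exp 1) ^ n := by
      rw [sqrt_mul zero_le_two]
      field_simp

theorem sqrt_two_mul_pi_div_exp_one_sq_mul_le_add_choose {r k : ℕ} (hr : r ≠ 0) (hk : k ≠ 0) :
    √(2 * π) / exp 1 ^ 2 * √((r + k) / (r * k)) * ((r + k) ^ (r + k) / (r ^ r * k ^ k))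
      ≤ ((r + k).choose r : ℝ) := by
  rw [cast_add_choose]
  calc √(2 * π) / exp 1 ^ 2 * √((r + k) / (r * k)) * ((r + k) ^ (r + k) / (r ^ r * k ^ k))
      = √(2 * π * (r + k : ℕ)) * ((r + k : ℕ) / exp 1) ^ (r + k) /
          ((exp 1 * √r * (r / exp 1) ^ r) * (exp 1 * √k * (k / exp 1) ^ k)) := by
        push_cast
        rw [sqrt_mul' _ (by positivity : (0 : ℝ) ≤ r + k), sqrt_div (by positivity),
          sqrt_mul r.cast_nonneg, div_pow, div_pow, div_pow, pow_add (exp 1)]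
        field_simp
    _ ≤ ((r + k)! : ℝ) / (r ! * k !) := by
      gcongr
      · exact le_factorial_stirling _
      · exact factorial_le_exp_one_mul_sqrt_mul_pow hr
      · exact factorial_le_exp_one_mul_sqrt_mul_pow hk

theorem one_third_lt_sqrt_two_mul_pi_div_exp_one_sq : 1 / 3 < √(2 * π) / exp 1 ^ 2 := by
  rw [div_lt_div_iff₀ three_pos (by positivity), one_mul]
  refine lt_of_pow_lt_pow_left₀ 2 (by positivity) ?_
  rw [mul_pow, sq_sqrt (by positivity)]
  have he := exp_one_lt_d9
  have hπ := pi_gt_d2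
  have he2 : exp 1 ^ 2 < 7.39 := by nlinarith [exp_pos 1]
  nlinarith [pow_pos (exp_pos 1) 2]

/-- for all integers `r ≥ 1` and `t ≥ 0`,
`binom(r(t+2), r) > (1/(3√r)) ((t+2)^{t+2}/(t+1)^{t+1})^r`. -/
theorem choose_gt (r t : ℕ) (hr : 1 ≤ r) :
    (1 / (3 * Real.sqrt r)) *
        (((t : ℝ) + 2) ^ (t + 2) / ((t : ℝ) + 1) ^ (t + 1)) ^ r <
      ((r * (t + 2)).choose r : ℝ) := by
  set k := r * (t + 1)
  have hr' : (0 : ℝ) < r := by exact_mod_cast hr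
  have hpow : ((r : ℝ) + k) ^ (r + k) / (r ^ r * k ^ k)
      = (((t : ℝ) + 2) ^ (t + 2) / ((t : ℝ) + 1) ^ (t + 1)) ^ r := by
    simp only [k]
    push_cast
    rw [show (r : ℝ) + r * (t + 1) = r * (t + 2) by ring,
      show r + r * (t + 1) = r * (t + 2) by ring, mul_pow, mul_pow, div_pow, ← pow_mul, ← pow_mul, mul_comm (t + 2), mul_comm (t + 1),
      show r * (t + 2) = r + r * (t + 1) by ring, pow_add (r : ℝ)]
    field_simp
  have hsqrt : 1 / √r ≤ √((r + k) / (r * k)) := by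
    rw [one_div, ← sqrt_inv]
    gcongr
    rw [inv_eq_one_div, div_le_div_iff₀ hr' (by positivity)]
    nlinarith
  calc (1 / (3 * √r)) * (((t : ℝ) + 2) ^ (t + 2) / ((t : ℝ) + 1) ^ (t + 1)) ^ r
      = 1 / 3 * (1 / √r) * (((r : ℝ) + k) ^ (r + k) / (r ^ r * k ^ k)) := by
        rw [hpow]; field_simp
    _ < √(2 * π) / exp 1 ^ 2 * (1 / √r) * ((r + k) ^ (r + k) / (r ^ r * k ^ k)) := by
        gcongr ?_ * _ * _
        exact one_third_lt_sqrt_two_mul_pi_div_exp_one_sq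
    _ ≤ √(2 * π) / exp 1 ^ 2 * √((r + k) / (r * k)) * ((r + k) ^ (r + k) / (r ^ r * k ^ k)) := by
        gcongr
    _ ≤ ((r + k).choose r : ℝ) :=
        sqrt_two_mul_pi_div_exp_one_sq_mul_le_add_choose (by omega) (by positivity)
    _ = ((r * (t + 2)).choose r : ℝ) := by rw [show r + k = r * (t + 2) by ring]
end

section
/- Erdős–Kleitman lemma: every r-uniform hypergraph F on a vertex set V contains an r-partite subhypergraph F* with |F*| ≥ (r!/r^r)·|F|. -/
/-!
Colour the vertices uniformly at random with `r` colours. An edge with `r` vertices receives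
`r` distinct colours in a fraction `r! / r^r` of all colourings, so on average, and hence for
some colouring, at least that fraction of the edges is rainbow. The colour classes of such a
colouring partition `V`, and every rainbow edge meets each of them exactly once.
-/

open Finset Function Nat

section Counting

variable {β γ : Type*} [Fintype β] [DecidableEq β] [Fintype γ] [DecidableEq γ]

theorem card_injective_restrict (p : β → Prop) [DecidablePred p] :
    Fintype.card {c : β → γ // Injective fun x : Subtype p => c x} =
      (Fintype.card γ).descFactorial (Fintype.card (Subtype p)) *
        Fintype.card γ ^ Fintype.card {x // ¬p x} := by
  let e := (Equiv.piEquivPiSubtypeProd p fun _ => γ).subtypeEquiv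
      (p := fun c : β → γ => Injective fun x : Subtype p => c x)
      (q := fun c => Injective c.1) fun _ => Iff.rfl
  rw [Fintype.card_congr (e.trans Equiv.prodSubtypeFstEquivSubtypeProd), Fintype.card_prod,
    Fintype.card_congr (Equiv.subtypeInjectiveEquivEmbedding _ _), Fintype.card_embedding_eq,
    Fintype.card_fun]

/-- Averaging over `C`: some `c` is related to at least `k * #F / card C` elements of `F`. -/
theorem exists_mul_card_le_card_mul_card_filter {C ι : Type*} [Fintype C] [Nonempty C]
    (rel : C → ι → Prop) [∀ c E, Decidable (rel c E)] {F : Finset ι} {k : ℕ}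
    (hk : ∀ E ∈ F, (univ.filter fun c => rel c E).card = k) :
    ∃ c, k * F.card ≤ Fintype.card C * (F.filter (rel c)).card := by
  have hsum : ∑ c : C, (F.filter (rel c)).card = F.card * k := by
    rw [← sum_const_nat hk]
    exact sum_card_bipartiteAbove_eq_sum_card_bipartiteBelow rel
  obtain ⟨c, -, hc⟩ := exists_le_of_sum_le (f := fun _ => k * F.card)
    (g := fun c => Fintype.card C * (F.filter (rel c)).card) univ_nonempty
    (by simp only [sum_const, Finset.card_univ, smul_eq_mul, ← mul_sum, hsum, mul_comm k,
      le_refl])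
  exact ⟨c, hc⟩

end Counting

section Colouring

variable {α : Type*} {V : Finset α} {r : ℕ}

def colourClass (c : V → Fin r) (i : Fin r) : Finset α :=
  (univ.filter (c · = i)).map (Embedding.subtype _)

theorem mem_colourClass {c : V → Fin r} {i : Fin r} {x : α} :
    x ∈ colourClass c i ↔ ∃ h : x ∈ V, c ⟨x, h⟩ = i := by
  simp [colourClass]

theorem disjoint_colourClass (c : V → Fin r) {i j : Fin r} (hij : i ≠ j) :
    Disjoint (colourClass c i) (colourClass c j) := by
  simp only [colourClass, disjoint_map, disjoint_filter]
  rintro x - rfl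
  exact hij

theorem biUnion_colourClass [DecidableEq α] (c : V → Fin r) :
    univ.biUnion (colourClass c) = V := by
  ext x
  simp only [mem_biUnion, mem_univ, true_and, mem_colourClass]
  exact ⟨fun ⟨_, h, _⟩ => h, fun h => ⟨_, h, rfl⟩⟩

def IsRainbow (c : V → Fin r) (E : Finset α) : Prop :=
  Injective fun x : {x : V // x.1 ∈ E} => c x

instance [DecidableEq α] (c : V → Fin r) (E : Finset α) : Decidable (IsRainbow c E) := by
  unfold IsRainbow; infer_instance

theorem card_subtype_mem_of_subset [DecidableEq α] {E : Finset α} (hE : E ⊆ V) :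
    Fintype.card {x : V // x.1 ∈ E} = E.card := by
  rw [Fintype.card_congr (Equiv.subtypeSubtypeEquivSubtype fun h => hE h), Fintype.card_coe]

theorem card_inter_colourClass_of_isRainbow [DecidableEq α] {c : V → Fin r} {E : Finset α}
    (hE : E ⊆ V) (hEr : E.card = r) (hc : IsRainbow c E) (i : Fin r) :
    (E ∩ colourClass c i).card = 1 := by
  have hbij : Bijective fun x : {x : V // x.1 ∈ E} => c x :=
    (Fintype.bijective_iff_injective_and_card _).2
      ⟨hc, by rw [card_subtype_mem_of_subset hE, hEr, Fintype.card_fin]⟩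
  obtain ⟨⟨⟨x, hxV⟩, hxE⟩, hx⟩ := hbij.2 i
  refine card_eq_one.2 ⟨x, ext fun y => ?_⟩
  simp only [mem_inter, mem_colourClass, mem_singleton]
  constructor
  · rintro ⟨hyE, hyV, hy⟩
    simpa using @hbij.1 ⟨⟨y, hyV⟩, hyE⟩ ⟨⟨x, hxV⟩, hxE⟩ (hy.trans hx.symm)
  · rintro rfl
    exact ⟨hxE, hxV, hx⟩

theorem card_filter_isRainbow [DecidableEq α] {E : Finset α} (hE : E ⊆ V) :
    (univ.filter fun c : V → Fin r => IsRainbow c E).card =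
      r.descFactorial E.card * r ^ (V.card - E.card) := by
  rw [← Fintype.card_subtype]
  unfold IsRainbow
  rw [card_injective_restrict, Fintype.card_subtype_compl, card_subtype_mem_of_subset hE,
    Fintype.card_coe, Fintype.card_fin]

theorem exists_colouring_card_filter_isRainbow [DecidableEq α] (hr : 0 < r)
    {F : Finset (Finset α)} (hF : ∀ E ∈ F, E ⊆ V ∧ E.card = r) :
    ∃ c : V → Fin r, r ! * F.card ≤ r ^ r * (F.filter (IsRainbow c)).card := by
  have : NeZero r := ⟨hr.ne'⟩
  obtain rfl | ⟨E, hE⟩ := F.eq_empty_or_nonempty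
  · exact ⟨fun _ => 0, by simp⟩
  have hrV : r ≤ V.card := (hF E hE).2 ▸ card_le_card (hF E hE).1
  obtain ⟨c, hc⟩ := exists_mul_card_le_card_mul_card_filter (C := V → Fin r) IsRainbow
    fun E hE => by rw [card_filter_isRainbow (hF E hE).1, (hF E hE).2, descFactorial_self]
  refine ⟨c, Nat.le_of_mul_le_mul_right (c := r ^ (V.card - r)) ?_ (by positivity)⟩
  calc r ! * F.card * r ^ (V.card - r) = r ! * r ^ (V.card - r) * F.card := by ring
    _ ≤ Fintype.card (V → Fin r) * (F.filter (IsRainbow c)).card := hc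
    _ = r ^ r * (F.filter (IsRainbow c)).card * r ^ (V.card - r) := by
      rw [Fintype.card_fun, Fintype.card_coe, Fintype.card_fin, mul_right_comm, ← pow_add,
        Nat.add_sub_cancel' hrV]

end Colouring

/-- Erdős–Kleitman: every `r`-uniform hypergraph `F` on a vertex set `V`
contains an `r`-partite subhypergraph `F*` with `|F*| ≥ (r!/r^r)|F|`, i.e. there is a
partition `V = V1 ∪ … ∪ Vr` such that every edge of `F*` meets each part exactly once
and `r! * |F| ≤ r^r * |F*|`. -/
theorem erdos_kleitman (r : ℕ) (hr : 1 ≤ r) (V : Finset ℕ) (F : Finset (Finset ℕ))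
    (hF : ∀ E ∈ F, E ⊆ V ∧ E.card = r) :
    ∃ F' ⊆ F, ∃ P : Fin r → Finset ℕ,
      (∀ i j, i ≠ j → Disjoint (P i) (P j)) ∧
      Finset.univ.biUnion P = V ∧
      (∀ E ∈ F', ∀ i, (E ∩ P i).card = 1) ∧
      r.factorial * F.card ≤ r ^ r * F'.card := by
  obtain ⟨c, hc⟩ := exists_colouring_card_filter_isRainbow hr hF
  refine ⟨F.filter (IsRainbow c), filter_subset _ _, colourClass c,
    fun i j => disjoint_colourClass c, biUnion_colourClass c, fun E hE => ?_, hc⟩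
  obtain ⟨hEF, hEc⟩ := mem_filter.1 hE
  exact card_inter_colourClass_of_isRainbow (hF E hEF).1 (hF E hEF).2 hEc
end

section
/- Let q be a prime power, k ≥ 3, and let S ⊆ F_q with |S| = 2k such that for every partition S = X ∪ Y ∪ W with 1 ≤ |X|,|Y|,|W| < k the polynomials p_X, p_Y, p_W (with p_Z(x) = ∏_{z∈Z}(x−z)) are (k−|X|, k−|Y|, k−|W|)-independent. Then the family F = {F(p) : p polynomial over F_q of degree < k}, where F(p) = {(s, p(s)) : s ∈ S} ⊆ S × F_q, is a 2k-uniform 2-cancellative family of size q^k. -/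
/-!
Write `B = F(b)`, `C = F(c)`, `A_i = F(p_i)`. If `A₁ ∪ A₂ ∪ B = A₁ ∪ A₂ ∪ C` with `b ≠ c`, then at
every point of `S` the value of `b` is one of `p₁, p₂, c` and vice versa, so `S` splits into
`W = {b = c}`, `X = {b = p₁, c = p₂}` and `Y = {b = p₂, c = p₁}`. Two distinct polynomials of
degree `< k` agree on fewer than `k` points, so each part has fewer than `k` elements; as
`|S| = 2k`, each part is nonempty and `|X ∪ Y| > k`, whence `p₁ + p₂ = b + c`. Writing
`p₁ - b = f₁ p_X`, `p₂ - b = f₂ p_Y`, `c - b = f₃ p_W` gives `f₁ p_X + f₂ p_Y - f₃ p_W = 0` with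
the degree bounds of the independence hypothesis, so `f₃ = 0`, i.e. `b = c`.
-/

open Polynomial Finset Lagrange

section Partition

variable {α β : Type*} [DecidableEq α] [DecidableEq β]

theorem exists_partition_of_forall_eq_or_eq (S : Finset α) (a₁ a₂ b c : α → β)
    (hb : ∀ s ∈ S, b s = a₁ s ∨ b s = a₂ s ∨ b s = c s)
    (hc : ∀ s ∈ S, c s = a₁ s ∨ c s = a₂ s ∨ c s = b s) :
    ∃ X Y W : Finset α, Disjoint X Y ∧ Disjoint X W ∧ Disjoint Y W ∧ X ∪ Y ∪ W = S ∧
      (∀ s ∈ X, b s = a₁ s ∧ c s = a₂ s) ∧ (∀ s ∈ Y, b s = a₂ s ∧ c s = a₁ s) ∧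
      ∀ s ∈ W, b s = c s := by
  refine ⟨S.filter fun s => b s ≠ c s ∧ b s = a₁ s, S.filter fun s => b s ≠ c s ∧ b s ≠ a₁ s,
    S.filter fun s => b s = c s, disjoint_filter.2 fun _ _ h h' => h'.2 h.2,
    disjoint_filter.2 fun _ _ h h' => h.1 h', disjoint_filter.2 fun _ _ h h' => h.1 h', ?_,
    ?_, ?_, fun s hs => (mem_filter.1 hs).2⟩
  · ext s
    simp only [mem_union, mem_filter]
    tauto
  · intro s hs
    obtain ⟨hs, hbc, hb₁⟩ := mem_filter.1 hs
    refine ⟨hb₁, ?_⟩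
    rcases hc s hs with h | h | h
    · exact absurd (hb₁.trans h.symm) hbc
    · exact h
    · exact absurd h.symm hbc
  · intro s hs
    obtain ⟨hs, hbc, hb₁⟩ := mem_filter.1 hs
    have hb₂ : b s = a₂ s := by
      rcases hb s hs with h | h | h
      · exact absurd h hb₁
      · exact h
      · exact absurd h hbc
    refine ⟨hb₂, ?_⟩
    rcases hc s hs with h | h | h
    · exact h
    · exact absurd (hb₂.trans h.symm) hbc
    · exact absurd h.symm hbc

end Partition

namespace Polynomial

variable {F : Type*} [Field F]

def DegIndependent (k₁ k₂ k₃ : ℕ) (p₁ p₂ p₃ : F[X]) : Prop :=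
  ∀ f₁ f₂ f₃ : F[X], f₁.degree < (k₁ : WithBot ℕ) → f₂.degree < (k₂ : WithBot ℕ) →
    f₃.degree < (k₃ : WithBot ℕ) → f₁ * p₁ + f₂ * p₂ + f₃ * p₃ = 0 → f₁ = 0 ∧ f₂ = 0 ∧ f₃ = 0

/-- `nodal X id` is the paper's `p_X = ∏_{z ∈ X} (x - z)`. -/
def HasIndependentPartitions [DecidableEq F] (k : ℕ) (S : Finset F) : Prop :=
  ∀ X Y W : Finset F, Disjoint X Y → Disjoint X W → Disjoint Y W → X ∪ Y ∪ W = S →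
    1 ≤ X.card → X.card < k → 1 ≤ Y.card → Y.card < k → 1 ≤ W.card → W.card < k →
    DegIndependent (k - X.card) (k - Y.card) (k - W.card) (nodal X id) (nodal Y id) (nodal W id)

theorem card_degreeLT [Fintype F] (k : ℕ) :
    Nat.card (degreeLT F k) = Fintype.card F ^ k := by
  rw [Nat.card_congr (degreeLTEquiv F k).toEquiv, Nat.card_fun, Nat.card_eq_fintype_card,
    Nat.card_fin]

variable {k : ℕ} {T : Finset F} {p q : F[X]}

theorem card_lt_of_eval_eq (hp : p ∈ degreeLT F k) (hq : q ∈ degreeLT F k) (hpq : p ≠ q)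
    (h : ∀ s ∈ T, p.eval s = q.eval s) : T.card < k := by
  by_contra! hk
  have hkT : (k : WithBot ℕ) ≤ T.card := by exact_mod_cast hk
  exact hpq <| eq_of_degrees_lt_of_eval_finset_eq T ((mem_degreeLT.1 hp).trans_le hkT)
    ((mem_degreeLT.1 hq).trans_le hkT) h

theorem nodal_dvd_of_eval_eq_zero (h : ∀ z ∈ T, p.eval z = 0) : nodal T id ∣ p :=
  Finset.prod_dvd_of_coprime ((pairwise_coprime_X_sub_C Function.injective_id).set_pairwise _)
    fun z hz => dvd_iff_isRoot.2 (h z hz)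

theorem exists_eq_mul_nodal_of_eval_eq_zero (hp : p ∈ degreeLT F k)
    (h : ∀ z ∈ T, p.eval z = 0) :
    ∃ f : F[X], p = f * nodal T id ∧ f.degree < ((k - T.card : ℕ) : WithBot ℕ) := by
  obtain ⟨f, rfl⟩ := nodal_dvd_of_eval_eq_zero h
  refine ⟨f, mul_comm _ _, ?_⟩
  rcases eq_or_ne f 0 with rfl | hf
  · simp
  have hdeg := natDegree_lt_iff_degree_lt (mul_ne_zero nodal_ne_zero hf) |>.2 (mem_degreeLT.1 hp)
  rw [natDegree_mul nodal_ne_zero hf, natDegree_nodal] at hdeg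
  rw [degree_eq_natDegree hf]
  exact_mod_cast (by omega : f.natDegree < k - T.card)

theorem eq_of_forall_eval_eq_or_eq [DecidableEq F] {S : Finset F} (hS : S.card = 2 * k)
    (hS_indep : HasIndependentPartitions k S) {p₁ p₂ b c : F[X]} (hp₁ : p₁ ∈ degreeLT F k)
    (hp₂ : p₂ ∈ degreeLT F k) (hb : b ∈ degreeLT F k) (hc : c ∈ degreeLT F k)
    (hp₁b : p₁ ≠ b) (hp₂b : p₂ ≠ b)
    (hb_mem : ∀ s ∈ S, b.eval s = p₁.eval s ∨ b.eval s = p₂.eval s ∨ b.eval s = c.eval s)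
    (hc_mem : ∀ s ∈ S, c.eval s = p₁.eval s ∨ c.eval s = p₂.eval s ∨ c.eval s = b.eval s) :
    b = c := by
  by_contra hbc
  obtain ⟨X, Y, W, hXY, hXW, hYW, hXYW, hX, hY, hW⟩ :=
    exists_partition_of_forall_eq_or_eq S _ _ _ _ hb_mem hc_mem
  have hXk : X.card < k := card_lt_of_eval_eq hp₁ hb hp₁b fun s hs => (hX s hs).1.symm
  have hYk : Y.card < k := card_lt_of_eval_eq hp₂ hb hp₂b fun s hs => (hY s hs).1.symm
  have hWk : W.card < k := card_lt_of_eval_eq hb hc hbc hW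
  have hcard : X.card + Y.card + W.card = 2 * k := by
    rw [← hS, ← hXYW, card_union_of_disjoint (disjoint_union_left.2 ⟨hXW, hYW⟩),
      card_union_of_disjoint hXY]
  -- `p₁ + p₂` and `b + c` agree on `X ∪ Y`, which has more than `k` points.
  have hsum : p₁ + p₂ - b - c = 0 := by
    by_contra hne
    have := card_lt_of_eval_eq (T := X ∪ Y) (sub_mem (sub_mem (add_mem hp₁ hp₂) hb) hc)
      (zero_mem _) hne fun s hs => by
        rcases mem_union.1 hs with hs | hs
        · simp [(hX s hs).1, (hX s hs).2]
        · simp [(hY s hs).1, (hY s hs).2]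
    rw [card_union_of_disjoint hXY] at this
    omega
  obtain ⟨f₁, hf₁, hf₁k⟩ := exists_eq_mul_nodal_of_eval_eq_zero (T := X) (sub_mem hp₁ hb)
    fun s hs => by simp [(hX s hs).1]
  obtain ⟨f₂, hf₂, hf₂k⟩ := exists_eq_mul_nodal_of_eval_eq_zero (T := Y) (sub_mem hp₂ hb)
    fun s hs => by simp [(hY s hs).1]
  obtain ⟨f₃, hf₃, hf₃k⟩ := exists_eq_mul_nodal_of_eval_eq_zero (T := W) (sub_mem hc hb)
    fun s hs => by simp [hW s hs]
  obtain ⟨-, -, hf₃0⟩ := hS_indep X Y W hXY hXW hYW hXYW (by omega) hXk (by omega) hYk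
    (by omega) hWk f₁ f₂ (-f₃) hf₁k hf₂k (by rwa [degree_neg])
    (by linear_combination hsum - hf₁ - hf₂ + hf₃)
  rw [neg_eq_zero.1 hf₃0, zero_mul, sub_eq_zero] at hf₃
  exact hbc hf₃.symm

end Polynomial

section Graph

variable {F : Type*} [Field F] [DecidableEq F] {S : Finset F} {p b c : F[X]}

/-- The paper's `F(p)`. -/
def polyGraph (S : Finset F) (p : F[X]) : Finset (F × F) :=
  S.image fun s => (s, p.eval s)

theorem mem_polyGraph {x : F × F} : x ∈ polyGraph S p ↔ x.1 ∈ S ∧ p.eval x.1 = x.2 := by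
  constructor
  · intro h
    obtain ⟨s, hs, rfl⟩ := mem_image.1 h
    exact ⟨hs, rfl⟩
  · rintro ⟨hs, h⟩
    exact mem_image.2 ⟨x.1, hs, Prod.ext rfl h⟩

theorem card_polyGraph : (polyGraph S p).card = S.card :=
  card_image_of_injective _ fun _ _ h => (Prod.ext_iff.1 h).1

theorem polyGraph_injOn {k : ℕ} (hk : k ≤ S.card) :
    Set.InjOn (polyGraph S) (degreeLT F k : Set F[X]) := by
  intro p hp q hq h
  have hkS : (k : WithBot ℕ) ≤ S.card := by exact_mod_cast hk
  refine eq_of_degrees_lt_of_eval_finset_eq S ((mem_degreeLT.1 hp).trans_le hkS)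
    ((mem_degreeLT.1 hq).trans_le hkS) fun s hs => ?_
  exact (mem_polyGraph.1 (h ▸ mem_polyGraph.2 ⟨hs, rfl⟩ : (s, p.eval s) ∈ polyGraph S q)).2.symm

theorem eval_eq_or_eq_of_polyGraph_subset {p₁ p₂ : F[X]}
    (h : polyGraph S b ⊆ polyGraph S p₁ ∪ polyGraph S p₂ ∪ polyGraph S c) :
    ∀ s ∈ S, b.eval s = p₁.eval s ∨ b.eval s = p₂.eval s ∨ b.eval s = c.eval s := by
  intro s hs
  have := h (mem_polyGraph.2 ⟨hs, rfl⟩ : (s, b.eval s) ∈ polyGraph S b)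
  simp only [mem_union, mem_polyGraph] at this
  tauto

theorem polyGraph_eq_of_union_eq {k : ℕ} (hS : S.card = 2 * k)
    (hS_indep : HasIndependentPartitions k S)
    {p₁ p₂ : F[X]} (hp₁ : p₁ ∈ degreeLT F k) (hp₂ : p₂ ∈ degreeLT F k) (hb : b ∈ degreeLT F k)
    (hc : c ∈ degreeLT F k) (h₁b : polyGraph S p₁ ≠ polyGraph S b)
    (h₂b : polyGraph S p₂ ≠ polyGraph S b)
    (h : polyGraph S p₁ ∪ polyGraph S p₂ ∪ polyGraph S b =
      polyGraph S p₁ ∪ polyGraph S p₂ ∪ polyGraph S c) :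
    polyGraph S b = polyGraph S c := by
  refine congrArg (polyGraph S) (eq_of_forall_eval_eq_or_eq hS hS_indep hp₁ hp₂ hb hc
    (by rintro rfl; exact h₁b rfl) (by rintro rfl; exact h₂b rfl)
    (eval_eq_or_eq_of_polyGraph_subset ?_) (eval_eq_or_eq_of_polyGraph_subset ?_))
  · exact h ▸ subset_union_right
  · exact h.symm ▸ subset_union_right

end Graph

theorem algebraic_construction_general (Fq : Type*) [Field Fq] [Fintype Fq] [DecidableEq Fq]
    (k : ℕ) (S : Finset Fq) (hS : S.card = 2 * k)
    (hindep : ∀ X Y W : Finset Fq,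
      Disjoint X Y → Disjoint X W → Disjoint Y W → X ∪ Y ∪ W = S →
      1 ≤ X.card → X.card < k → 1 ≤ Y.card → Y.card < k → 1 ≤ W.card → W.card < k →
      ∀ f1 f2 f3 : Fq[X],
        f1.degree < ((k - X.card : ℕ) : WithBot ℕ) →
        f2.degree < ((k - Y.card : ℕ) : WithBot ℕ) →
        f3.degree < ((k - W.card : ℕ) : WithBot ℕ) →
        f1 * (∏ z ∈ X, (Polynomial.X - Polynomial.C z)) +
          f2 * (∏ z ∈ Y, (Polynomial.X - Polynomial.C z)) +
          f3 * (∏ z ∈ W, (Polynomial.X - Polynomial.C z)) = 0 →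
        f1 = 0 ∧ f2 = 0 ∧ f3 = 0) :
    let Fam : Set (Finset (Fq × Fq)) :=
      {A | ∃ p : Fq[X], p.degree < ((k : ℕ) : WithBot ℕ) ∧
        A = S.image (fun s => (s, p.eval s))}
    (∀ A ∈ Fam, A.card = 2 * k) ∧
    (∀ A1 ∈ Fam, ∀ A2 ∈ Fam, ∀ B ∈ Fam, ∀ C ∈ Fam,
      A1 ≠ A2 → A1 ≠ B → A1 ≠ C → A2 ≠ B → A2 ≠ C →
      A1 ∪ A2 ∪ B = A1 ∪ A2 ∪ C → B = C) ∧
    Fam.ncard = Fintype.card Fq ^ k := by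
  intro Fam
  have hFam : Fam = polyGraph S '' (degreeLT Fq k : Set Fq[X]) := by
    ext A
    simp only [Fam, Set.mem_ofPred_eq, Set.mem_image, SetLike.mem_coe, mem_degreeLT, polyGraph,
      eq_comm]
  have hS_indep : HasIndependentPartitions k S := hindep
  rw [hFam]
  refine ⟨?_, ?_, ?_⟩
  · rintro A ⟨p, -, rfl⟩
    exact card_polyGraph.trans hS
  · rintro A1 ⟨p₁, hp₁, rfl⟩ A2 ⟨p₂, hp₂, rfl⟩ B ⟨b, hb, rfl⟩ C ⟨c, hc, rfl⟩ - h₁b - h₂b - h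
    exact polyGraph_eq_of_union_eq hS hS_indep hp₁ hp₂ hb hc h₁b h₂b h
  · exact (polyGraph_injOn (by omega)).ncard_image.trans (card_degreeLT k)

/-- if `S ⊆ F_q` has `2k` elements such that for every partition
`S = X ∪ Y ∪ W` into parts of sizes between `1` and `k-1` the polynomials
`p_X, p_Y, p_W` are `(k-|X|, k-|Y|, k-|W|)`-independent, then the family of graphs
`F(p) = {(s, p(s)) : s ∈ S}` of polynomials `p` of degree `< k` is a `2k`-uniform
2-cancellative family of size `q^k`. -/
theorem algebraic_construction (Fq : Type*) [Field Fq] [Fintype Fq] [DecidableEq Fq]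
    (k : ℕ) (hk : 3 ≤ k) (S : Finset Fq) (hS : S.card = 2 * k)
    (hindep : ∀ X Y W : Finset Fq,
      Disjoint X Y → Disjoint X W → Disjoint Y W → X ∪ Y ∪ W = S →
      1 ≤ X.card → X.card < k → 1 ≤ Y.card → Y.card < k → 1 ≤ W.card → W.card < k →
      ∀ f1 f2 f3 : Fq[X],
        f1.degree < ((k - X.card : ℕ) : WithBot ℕ) →
        f2.degree < ((k - Y.card : ℕ) : WithBot ℕ) →
        f3.degree < ((k - W.card : ℕ) : WithBot ℕ) →
        f1 * (∏ z ∈ X, (Polynomial.X - Polynomial.C z)) +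
          f2 * (∏ z ∈ Y, (Polynomial.X - Polynomial.C z)) +
          f3 * (∏ z ∈ W, (Polynomial.X - Polynomial.C z)) = 0 →
        f1 = 0 ∧ f2 = 0 ∧ f3 = 0) :
    let Fam : Set (Finset (Fq × Fq)) :=
      {A | ∃ p : Fq[X], p.degree < ((k : ℕ) : WithBot ℕ) ∧
        A = S.image (fun s => (s, p.eval s))}
    (∀ A ∈ Fam, A.card = 2 * k) ∧
    (∀ A1 ∈ Fam, ∀ A2 ∈ Fam, ∀ B ∈ Fam, ∀ C ∈ Fam,
      A1 ≠ A2 → A1 ≠ B → A1 ≠ C → A2 ≠ B → A2 ≠ C →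
      A1 ∪ A2 ∪ B = A1 ∪ A2 ∪ C → B = C) ∧
    Fam.ncard = Fintype.card Fq ^ k :=
  algebraic_construction_general Fq k S hS hindep
end

section
/- c_3(n,2) ≤ n(n+1)/6 and c_4(n,2) ≤ n(n−1)/6 for all n, where c_r(n,2) is the maximum size of an r-uniform 2-cancellative family on n vertices. -/
/-- `c_r(n,2)`: maximum size of an `r`-uniform 2-cancellative family on `[n]`. -/
noncomputable def cUnifMax2 (n r : ℕ) : ℕ :=
  sSup {m | ∃ F : Finset (Finset ℕ),
    (∀ A ∈ F, A ⊆ Finset.range n ∧ A.card = r) ∧ TwoCancellative F ∧ F.card = m}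

/-!
Count the flags `(A, T)` with `A ∈ F` and `T` a 2-subset of `A`; a 4-uniform `F` has `6 |F|` of
them. Call a flag own if `A` is the only member containing `A \ T`: an own flag is determined by
the pair `A \ T`. For a fixed `T` at most one flag is not own, since `A, B ⊇ T` with
`A \ T ⊆ D ≠ A` and `B \ T ⊆ E ≠ B` give `D ∪ E ∪ A = D ∪ E ∪ T = D ∪ E ∪ B`, contradicting
2-cancellativity (when `D = E`, a fourth member takes the place of `E`; families with at most
three members are small enough to check directly). Hence `6 |F| ≤ 2 (n choose 2)`. A 3-uniform
family on `[n]` becomes a 4-uniform one on `[n + 1]` by adding the new vertex `n` to every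
member.
-/

open Finset

section

variable {α : Type*} [DecidableEq α]

lemma union_eq_union_of_sdiff_subset {A T U : Finset α} (hTA : T ⊆ A) (h : A \ T ⊆ U) :
    U ∪ A = U ∪ T := by
  rw [← union_sdiff_of_subset hTA, ← union_assoc, union_comm U T, union_assoc,
    union_eq_left.mpr h]

lemma subset_of_sdiff_subset {A B T : Finset α} (hTB : T ⊆ B) (hTA : T ⊆ A)
    (h : A \ T ⊆ B) : A ⊆ B := by
  have := union_eq_union_of_sdiff_subset hTA h
  rw [union_eq_left.mpr hTB] at this
  exact this ▸ subset_union_right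

lemma insert_eq_insert_iff_of_notMem {x : α} {A B : Finset α} (hA : x ∉ A) (hB : x ∉ B) :
    insert x A = insert x B ↔ A = B :=
  ⟨fun h => by rw [← erase_insert hA, h, erase_insert hB], congrArg _⟩

end

def IsOwnSubset (F : Finset (Finset ℕ)) (A S : Finset ℕ) : Prop :=
  ∀ D ∈ F, S ⊆ D → D = A

section

variable {F : Finset (Finset ℕ)} {V : Finset ℕ} {r : ℕ}

theorem TwoCancellative.eq_of_sdiff_subset (hc : TwoCancellative F) (hr : ∀ A ∈ F, A.card = r)
    (h4 : 4 ≤ F.card) {A B D E T : Finset ℕ} (hA : A ∈ F) (hB : B ∈ F) (hD : D ∈ F) (hE : E ∈ F)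
    (hTA : T ⊆ A) (hTB : T ⊆ B) (hDA : D ≠ A) (hEB : E ≠ B) (hAD : A \ T ⊆ D)
    (hBE : B \ T ⊆ E) : A = B := by
  by_contra hAB
  have hDB : D ≠ B := by
    rintro rfl
    exact hAB (eq_of_subset_of_card_le (subset_of_sdiff_subset hTB hTA hAD)
      (by rw [hr A hA, hr D hD]))
  have hEA : E ≠ A := by
    rintro rfl
    exact hAB (eq_of_subset_of_card_le (subset_of_sdiff_subset hTA hTB hBE)
      (by rw [hr B hB, hr E hE])).symm
  have hunion : ∀ {U}, A \ T ⊆ U → B \ T ⊆ U → U ∪ A = U ∪ B := fun hA' hB' => by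
    rw [union_eq_union_of_sdiff_subset hTA hA', union_eq_union_of_sdiff_subset hTB hB']
  by_cases hDE : D = E
  · subst hDE
    obtain ⟨X, hX, hXABD⟩ : ∃ X ∈ F, X ∉ ({A, B, D} : Finset (Finset ℕ)) :=
      exists_mem_notMem_of_card_lt_card (card_le_three.trans_lt h4)
    simp only [mem_insert, mem_singleton, not_or] at hXABD
    obtain ⟨hXA, hXB, hXD⟩ := hXABD
    exact hAB (hc D X A B hD hX hA hB (Ne.symm hXD) hDA hDB hXA hXB
      (hunion (hAD.trans subset_union_left) (hBE.trans subset_union_left)))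
  · exact hAB (hc D E A B hD hE hA hB hDE hDA hDB hEA hEB
      (hunion (hAD.trans subset_union_left) (hBE.trans subset_union_right)))

open Classical in
lemma card_filter_isOwnSubset_le (hF : ∀ A ∈ F, A ⊆ V ∧ A.card = r) (k : ℕ) :
    ((F.sigma fun A => A.powersetCard k).filter fun x => IsOwnSubset F x.1 (x.1 \ x.2)).card ≤
      V.card.choose (r - k) := by
  rw [← card_powersetCard]
  refine card_le_card_of_injOn (fun x => x.1 \ x.2) (fun ⟨A, T⟩ hx => ?_) ?_
  · rw [mem_coe, mem_filter, mem_sigma, mem_powersetCard] at hx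
    obtain ⟨⟨hA, hTA, hT⟩, -⟩ := hx
    rw [mem_coe, mem_powersetCard, card_sdiff_of_subset hTA, (hF A hA).2, hT]
    exact ⟨sdiff_subset.trans (hF A hA).1, rfl⟩
  · rintro ⟨A, T⟩ hx ⟨B, S⟩ hy (h : A \ T = B \ S)
    rw [mem_coe, mem_filter, mem_sigma, mem_powersetCard] at hx hy
    obtain rfl : B = A := hx.2 B hy.1.1 (h ▸ sdiff_subset)
    have hTB : T ⊆ B := hx.1.2.1
    have hSB : S ⊆ B := hy.1.2.1
    rw [← Finset.sdiff_sdiff_eq_self hTB, h, Finset.sdiff_sdiff_eq_self hSB]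

open Classical in
lemma card_filter_not_isOwnSubset_le (hc : TwoCancellative F) (h4 : 4 ≤ F.card)
    (hF : ∀ A ∈ F, A ⊆ V ∧ A.card = r) (k : ℕ) :
    ((F.sigma fun A => A.powersetCard k).filter fun x => ¬ IsOwnSubset F x.1 (x.1 \ x.2)).card ≤
      V.card.choose k := by
  rw [← card_powersetCard]
  refine card_le_card_of_injOn (fun x => x.2) (fun ⟨A, T⟩ hx => ?_) ?_
  · rw [mem_coe, mem_filter, mem_sigma, mem_powersetCard] at hx
    obtain ⟨⟨hA, hTA, hT⟩, -⟩ := hx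
    exact mem_powersetCard.mpr ⟨hTA.trans (hF A hA).1, hT⟩
  · rintro ⟨A, T⟩ hx ⟨B, S⟩ hy (rfl : T = S)
    rw [mem_coe, mem_filter, mem_sigma, mem_powersetCard] at hx hy
    simp only [IsOwnSubset, not_forall] at hx hy
    obtain ⟨⟨hA, hTA, -⟩, D, hD, hAD, hDA⟩ := hx
    obtain ⟨⟨hB, hTB, -⟩, E, hE, hBE, hEB⟩ := hy
    obtain rfl := hc.eq_of_sdiff_subset (fun A hA => (hF A hA).2) h4 hA hB hD hE hTA hTB hDA hEB
      hAD hBE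
    rfl

theorem TwoCancellative.card_mul_choose_le_s19 (hc : TwoCancellative F) (h4 : 4 ≤ F.card)
    (hF : ∀ A ∈ F, A ⊆ V ∧ A.card = r) (k : ℕ) :
    F.card * r.choose k ≤ V.card.choose k + V.card.choose (r - k) := by
  classical
  have hflags : (F.sigma fun A => A.powersetCard k).card = F.card * r.choose k := by
    rw [card_sigma, sum_congr rfl fun A hA => by rw [card_powersetCard, (hF A hA).2], sum_const,
      smul_eq_mul]
  rw [← hflags, ← card_filter_add_card_filter_not (fun x => IsOwnSubset F x.1 (x.1 \ x.2))]
  have := card_filter_isOwnSubset_le hF k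
  have := card_filter_not_isOwnSubset_le hc h4 hF k
  omega

end


theorem TwoCancellative.image_insert {F : Finset (Finset ℕ)} (hc : TwoCancellative F) {x : ℕ}
    (hx : ∀ A ∈ F, x ∉ A) : TwoCancellative (F.image (insert x)) := by
  simp only [TwoCancellative, mem_image]
  rintro _ _ _ _ ⟨A1, h1, rfl⟩ ⟨A2, h2, rfl⟩ ⟨B, hB, rfl⟩ ⟨C, hC, rfl⟩ h12 h1B h1C h2B h2C hU
  have hxU : ∀ D ∈ F, x ∉ A1 ∪ A2 ∪ D := fun D hD => by
    simp only [mem_union, not_or]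
    exact ⟨⟨hx A1 h1, hx A2 h2⟩, hx D hD⟩
  simp only [← insert_union_distrib] at hU
  rw [insert_eq_insert_iff_of_notMem (hxU B hB) (hxU C hC)] at hU
  rw [hc A1 A2 B C h1 h2 hB hC (ne_of_apply_ne _ h12) (ne_of_apply_ne _ h1B)
    (ne_of_apply_ne _ h1C) (ne_of_apply_ne _ h2B) (ne_of_apply_ne _ h2C) hU]

section

variable {F : Finset (Finset ℕ)} {n : ℕ}

lemma card_mul_six_le_of_card_le_three (hF : ∀ A ∈ F, A ⊆ range n ∧ A.card = 4)
    (h3 : F.card ≤ 3) : F.card * 6 ≤ n.choose 2 * 2 := by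
  have hle : F.card ≤ n.choose 4 := by
    simpa using card_le_card fun A hA => mem_powersetCard.mpr (hF A hA)
  rcases le_or_gt 5 n with h5 | h5
  · have : 10 ≤ n.choose 2 := Nat.choose_le_choose 2 h5
    omega
  · interval_cases n <;> simp only [Nat.choose] at hle ⊢ <;> omega

theorem TwoCancellative.card_mul_six_le_of_four_uniform (hc : TwoCancellative F)
    (hF : ∀ A ∈ F, A ⊆ range n ∧ A.card = 4) : F.card * 6 ≤ n.choose 2 * 2 := by
  rcases le_or_gt 4 F.card with h4 | h3
  · have h := hc.card_mul_choose_le_s19 h4 hF 2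
    rwa [card_range, show Nat.choose 4 2 = 6 from rfl, ← mul_two] at h
  · exact card_mul_six_le_of_card_le_three hF (by omega)

theorem TwoCancellative.card_mul_six_le_of_three_uniform (hc : TwoCancellative F)
    (hF : ∀ A ∈ F, A ⊆ range n ∧ A.card = 3) : F.card * 6 ≤ (n + 1).choose 2 * 2 := by
  have hn : ∀ A ∈ F, n ∉ A := fun A hA h => by simpa using (hF A hA).1 h
  have hinj : Set.InjOn (insert n) F := fun A hA B hB h =>
    (insert_eq_insert_iff_of_notMem (hn A hA) (hn B hB)).mp h
  rw [← card_image_of_injOn hinj]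
  refine (hc.image_insert hn).card_mul_six_le_of_four_uniform ?_
  simp only [mem_image, forall_exists_index, and_imp]
  rintro _ A hA rfl
  refine ⟨insert_subset (by simp) ((hF A hA).1.trans (range_subset_range.mpr n.le_succ)), ?_⟩
  rw [card_insert_of_notMem (hn A hA), (hF A hA).2]

end

lemma exists_card_eq_cUnifMax2 (n r : ℕ) : ∃ F : Finset (Finset ℕ),
    (∀ A ∈ F, A ⊆ range n ∧ A.card = r) ∧ TwoCancellative F ∧ F.card = cUnifMax2 n r := by
  refine Nat.sSup_mem (s := {m | ∃ F : Finset (Finset ℕ),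
    (∀ A ∈ F, A ⊆ range n ∧ A.card = r) ∧ TwoCancellative F ∧ F.card = m}) ?_ ?_
  · exact ⟨0, ∅, by simp, fun A1 _ _ _ h1 => absurd h1 (notMem_empty _), rfl⟩
  refine ⟨(range n).powerset.card, ?_⟩
  rintro m ⟨F, hF, -, rfl⟩
  exact card_le_card fun A hA => mem_powerset.mpr (hF A hA).1

/-- `c_3(n,2) ≤ n(n+1)/6` and `c_4(n,2) ≤ n(n-1)/6`. -/
theorem c3_c4_upper_bounds (n : ℕ) :
    (cUnifMax2 n 3 : ℝ) ≤ (n : ℝ) * ((n : ℝ) + 1) / 6 ∧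
    (cUnifMax2 n 4 : ℝ) ≤ (n : ℝ) * ((n : ℝ) - 1) / 6 := by
  obtain ⟨F₃, hF₃, hc₃, hcard₃⟩ := exists_card_eq_cUnifMax2 n 3
  obtain ⟨F₄, hF₄, hc₄, hcard₄⟩ := exists_card_eq_cUnifMax2 n 4
  have h₃ : ((F₃.card * 6 : ℕ) : ℝ) ≤ ((n + 1).choose 2 * 2 : ℕ) := by
    exact_mod_cast hc₃.card_mul_six_le_of_three_uniform hF₃
  have h₄ : ((F₄.card * 6 : ℕ) : ℝ) ≤ (n.choose 2 * 2 : ℕ) := by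
    exact_mod_cast hc₄.card_mul_six_le_of_four_uniform hF₄
  push_cast [Nat.cast_choose_two] at h₃ h₄
  rw [← hcard₃, ← hcard₄]
  constructor <;> linarith
end
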